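/- arXiv:2103.15699 — 13 statements merged into one kernel-verified Lean document; each statement's English description precedes it below -/
import Mathlib

section
/- Let X, Y, Y1 be complex Hilbert spaces and let Z : Y → X and Z1 : Y1 → X be bounded linear operators with ran Z = ran Z1. Then there exists a bounded linear operator W : Y1 → Y such that Z1 = Z ∘ W, ker W = ker Z1, and ran W = closure(ran Z*), where Z* denotes the Hilbert-space adjoint of Z. -/
/-!
On `(ker Z)ᗮ` the operator `Z` is injective and has the same range as `Z`, hence as `Z1`, so
`W := (Z|_(ker Z)ᗮ)⁻¹ ∘ Z1` is a well-defined linear map onto `(ker Z)ᗮ = closure (ran Z*)`.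
Its graph `{(y, w) | Z w = Z1 y}` is closed, so `W` is bounded by the closed graph theorem.
-/

open ContinuousLinearMap

section Factorization

variable {𝕜 : Type*} [NontriviallyNormedField 𝕜]
  {E F G : Type*} [NormedAddCommGroup E] [NormedSpace 𝕜 E]
  [NormedAddCommGroup F] [NormedSpace 𝕜 F] [NormedAddCommGroup G] [NormedSpace 𝕜 G]
  {g : E →L[𝕜] G} {f : F →L[𝕜] G}

theorem ContinuousLinearMap.exists_comp_eq_of_range_le [CompleteSpace E] [CompleteSpace F]
    (hg : Function.Injective g) (hfg : f.range ≤ g.range) :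
    ∃ h : F →L[𝕜] E, g ∘L h = f := by
  let e := LinearEquiv.ofInjective (g : E →ₗ[𝕜] G) hg
  let h : F →ₗ[𝕜] E := e.symm ∘ₗ Submodule.inclusion hfg ∘ₗ (f : F →ₗ[𝕜] G).rangeRestrict
  have hgh : ∀ x, g (h x) = f x := fun x =>
    LinearEquiv.ofInjective_symm_apply (h := hg) _ _
  have hgraph : (h.graph : Set (F × E)) = {p | g p.2 = f p.1} := by
    ext ⟨x, y⟩
    simp only [SetLike.mem_coe, LinearMap.mem_graph_iff, Set.mem_ofPred_eq]
    exact ⟨fun hy => hy ▸ hgh x, fun hy => hg (hy.trans (hgh x).symm)⟩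
  refine ⟨.ofIsClosedGraph (g := h) ?_, ext hgh⟩
  rw [hgraph]
  exact isClosed_eq (by fun_prop) (by fun_prop)

theorem ContinuousLinearMap.ker_eq_of_comp_eq {h : F →L[𝕜] E} (hg : Function.Injective g)
    (hgh : g ∘L h = f) : h.ker = f.ker := by
  ext x
  simp [← hgh, map_eq_zero_iff g hg]

theorem ContinuousLinearMap.surjective_of_comp_eq {h : F →L[𝕜] E} (hg : Function.Injective g)
    (hgh : g ∘L h = f) (hgf : g.range ≤ f.range) : Function.Surjective h := by
  intro y
  obtain ⟨x, hx⟩ := hgf ⟨y, rfl⟩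
  exact ⟨x, hg (by simpa [← hgh] using hx)⟩

end Factorization

section Hilbert

variable {𝕜 : Type*} [RCLike 𝕜] {E F : Type*} [NormedAddCommGroup E] [InnerProductSpace 𝕜 E]
  [NormedAddCommGroup F] [InnerProductSpace 𝕜 F] (T : E →L[𝕜] F)

theorem ContinuousLinearMap.injective_comp_subtypeL_orthogonal_ker :
    Function.Injective (T ∘L T.kerᗮ.subtypeL) := by
  intro x y hxy
  have hker : (x - y : E) ∈ T.ker := by simpa [sub_eq_zero] using hxy
  have : (x - y : E) ∈ T.ker ⊓ T.kerᗮ := ⟨hker, sub_mem x.2 y.2⟩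
  rw [Submodule.inf_orthogonal_eq_bot, Submodule.mem_bot, sub_eq_zero] at this
  exact Subtype.ext this

theorem ContinuousLinearMap.range_comp_subtypeL_orthogonal_ker [CompleteSpace E] :
    (T ∘L T.kerᗮ.subtypeL).range = T.range := by
  refine le_antisymm ?_ ?_
  · rintro _ ⟨x, rfl⟩
    exact ⟨x, rfl⟩
  · rintro _ ⟨x, rfl⟩
    obtain ⟨k, hk, m, hm, rfl⟩ := T.ker.exists_add_mem_mem_orthogonal x
    exact ⟨⟨m, hm⟩, by simpa using hk⟩

end Hilbert

/-- Let `X`, `Y`, `Y1` be complex Hilbert spaces and let `Z : Y → X` and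
`Z1 : Y1 → X` be bounded linear operators with `ran Z = ran Z1`. Then there exists a bounded
linear operator `W : Y1 → Y` such that `Z1 = Z ∘ W`, `ker W = ker Z1`, and
`ran W = closure (ran Z*)`. -/
theorem exists_factor_of_range_eq
    {X Y Y1 : Type}
    [NormedAddCommGroup X] [InnerProductSpace ℂ X] [CompleteSpace X]
    [NormedAddCommGroup Y] [InnerProductSpace ℂ Y] [CompleteSpace Y]
    [NormedAddCommGroup Y1] [InnerProductSpace ℂ Y1] [CompleteSpace Y1]
    (Z : Y →L[ℂ] X) (Z1 : Y1 →L[ℂ] X)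
    (hran : Set.range ⇑Z = Set.range ⇑Z1) :
    ∃ W : Y1 →L[ℂ] Y,
      Z1 = Z ∘L W ∧
      LinearMap.ker (W : Y1 →ₗ[ℂ] Y) = LinearMap.ker (Z1 : Y1 →ₗ[ℂ] X) ∧
      Set.range ⇑W = closure (Set.range ⇑(adjoint Z)) := by
  set g := Z ∘L Z.kerᗮ.subtypeL
  have hg : Function.Injective g := Z.injective_comp_subtypeL_orthogonal_ker
  have hrange : g.range = Z1.range := by
    rw [Z.range_comp_subtypeL_orthogonal_ker]
    exact SetLike.coe_injective hran
  obtain ⟨h, hgh⟩ := exists_comp_eq_of_range_le hg hrange.ge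
  refine ⟨Z.kerᗮ.subtypeL ∘L h, hgh.symm, ?_, ?_⟩
  · exact (ker_eq_of_comp_eq (g := Z.kerᗮ.subtypeL) Subtype.val_injective rfl).symm.trans
      (ker_eq_of_comp_eq hg hgh)
  · rw [coe_comp, Set.range_comp, (surjective_of_comp_eq hg hgh hrange.le).range_eq,
      Set.image_univ, Submodule.coe_subtypeL, Submodule.coe_subtype, Subtype.range_coe,
      Z.orthogonal_ker, Submodule.topologicalClosure_coe, LinearMap.coe_range, coe_coe]
end

section
/- The following statements are equivalent: (i) L(A,B) is a closed subspace of H × K; (ii) ran(A*A + B*B) is closed in E; (iii) ran A* + ran B* is closed in E. -/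
/-!
Put `T := (A, B) : E → H ⊕ K` into the Hilbert direct sum, so that `L(A,B) = ran T`,
`T*T = A*A + B*B` and `ran T* = ran A* + ran B*`. It then suffices to show, for any bounded `T`
between Hilbert spaces, that `ran T`, `ran T*` and `ran T*T` are closed together.
If `ran T` is closed, then for `x ⊥ ker T` the functional `T v ↦ ⟪x, v⟫` is well defined and
bounded on `ran T` (the restriction of `T` to `(ker T)⊥` is an isomorphism onto `ran T`), and its
Riesz representative `y` has `T* y = x`; hence `ran T* = (ker T)⊥` is closed. Moreover
`ran T*T = ran T*`, because `F = ran T ⊕ ker T*`. Conversely, `ran T*T` and `ran T*` have the same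
closure `(ker T)⊥`, so if `ran T*T` is closed it equals `ran T*`.
-/

open scoped InnerProductSpace

namespace ContinuousLinearMap

variable {𝕜 E F H K : Type*} [RCLike 𝕜]
  [NormedAddCommGroup E] [InnerProductSpace 𝕜 E] [NormedAddCommGroup F] [InnerProductSpace 𝕜 F]
  [NormedAddCommGroup H] [InnerProductSpace 𝕜 H] [NormedAddCommGroup K] [InnerProductSpace 𝕜 K]

section ClosedRange

variable [CompleteSpace E] [CompleteSpace F]

theorem range_adjoint_eq_orthogonal_ker (T : E →L[𝕜] F) (hT : IsClosed (T.range : Set F)) :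
    (adjoint T).range = T.kerᗮ := by
  refine le_antisymm (T.orthogonal_ker ▸ Submodule.le_topologicalClosure _) fun x hx => ?_
  have : CompleteSpace T.ker := T.isClosed_ker.completeSpace_coe
  set S := T ∘L T.kerᗮ.subtypeL
  have hS_inj : Function.Injective S := by
    rw [injective_iff_map_eq_zero]
    rintro ⟨n, hn⟩ hSn
    exact Subtype.ext (T.ker.inf_orthogonal_eq_bot.le ⟨hSn, hn⟩)
  have hS_range : S.range = T.range := by
    refine le_antisymm (LinearMap.range_comp_le_range _ _) ?_
    rintro _ ⟨v, rfl⟩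
    obtain ⟨k, hk, n, hn, rfl⟩ := T.ker.exists_add_mem_mem_orthogonal v
    exact ⟨⟨n, hn⟩, by simp [S, show T k = 0 from hk]⟩
  rw [← hS_range] at hT
  have : CompleteSpace S.range := hT.completeSpace_coe
  let φ : S.range →L[𝕜] 𝕜 := innerSL 𝕜 x ∘L T.kerᗮ.subtypeL ∘L (S.equivRange hS_inj hT).symm
  refine ⟨(InnerProductSpace.toDual 𝕜 S.range).symm φ, ext_inner_right 𝕜 fun v => ?_⟩
  obtain ⟨k, hk, n, hn, rfl⟩ := T.ker.exists_add_mem_mem_orthogonal v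
  have hTk : T k = 0 := hk
  calc ⟪adjoint T ((InnerProductSpace.toDual 𝕜 S.range).symm φ), k + n⟫_𝕜
      = ⟪(InnerProductSpace.toDual 𝕜 S.range).symm φ, ⟨S ⟨n, hn⟩, S.mem_range_self _⟩⟫_𝕜 := by
        simp only [adjoint_inner_left, map_add, hTk, zero_add]; rfl
    _ = ⟪x, n⟫_𝕜 := by
      rw [InnerProductSpace.toDual_symm_apply]
      exact congrArg (fun m : T.kerᗮ => ⟪x, (m : E)⟫_𝕜) (S.equivRange_symm_apply hS_inj hT ⟨n, hn⟩)
    _ = ⟪x, k + n⟫_𝕜 := by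
      rw [inner_add_right, Submodule.inner_left_of_mem_orthogonal hk hx, zero_add]

theorem isClosed_range_adjoint_iff (T : E →L[𝕜] F) :
    IsClosed ((adjoint T).range : Set E) ↔ IsClosed (T.range : Set F) := by
  refine ⟨fun h => ?_, fun h => T.range_adjoint_eq_orthogonal_ker h ▸ T.ker.isClosed_orthogonal⟩
  rw [← adjoint_adjoint T, (adjoint T).range_adjoint_eq_orthogonal_ker h]
  exact (adjoint T).ker.isClosed_orthogonal

theorem topologicalClosure_range_adjoint_comp_self (T : E →L[𝕜] F) :
    (adjoint T ∘L T).range.topologicalClosure = (adjoint T).range.topologicalClosure := by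
  calc (adjoint T ∘L T).range.topologicalClosure
      = (adjoint (adjoint T ∘L T)).range.topologicalClosure := by
        rw [adjoint_comp, adjoint_adjoint]
    _ = T.kerᗮ := by rw [← orthogonal_ker (adjoint T ∘L T), ker_adjoint_comp_self]
    _ = (adjoint T).range.topologicalClosure := T.orthogonal_ker

theorem range_adjoint_comp_self_of_isClosed_range (T : E →L[𝕜] F)
    (hT : IsClosed (T.range : Set F)) : (adjoint T ∘L T).range = (adjoint T).range := by
  refine le_antisymm (LinearMap.range_comp_le_range _ _) ?_
  rintro _ ⟨y, rfl⟩
  have : CompleteSpace T.range := hT.completeSpace_coe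
  obtain ⟨_, ⟨w, rfl⟩, z, hz, rfl⟩ := T.range.exists_add_mem_mem_orthogonal y
  rw [orthogonal_range] at hz
  exact ⟨w, by simp [show adjoint T z = 0 from hz]⟩

theorem isClosed_range_adjoint_comp_self_iff (T : E →L[𝕜] F) :
    IsClosed ((adjoint T ∘L T).range : Set E) ↔ IsClosed (T.range : Set F) := by
  refine ⟨fun h => ?_, fun h => ?_⟩
  · have : (adjoint T).range = (adjoint T ∘L T).range := by
      refine le_antisymm ?_ (LinearMap.range_comp_le_range _ _)
      calc (adjoint T).range
          ≤ (adjoint T).range.topologicalClosure := Submodule.le_topologicalClosure _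
        _ = (adjoint T ∘L T).range.topologicalClosure :=
          (topologicalClosure_range_adjoint_comp_self T).symm
        _ = (adjoint T ∘L T).range := h.submodule_topologicalClosure_eq
    exact (isClosed_range_adjoint_iff T).1 (this ▸ h)
  · exact range_adjoint_comp_self_of_isClosed_range T h ▸ (isClosed_range_adjoint_iff T).2 h

end ClosedRange

section HilbertSum

/-- The operator `f ↦ (A f, B f)` into the Hilbert sum `H ⊕ K`; its range is `L(A,B)`. -/
noncomputable def prodL2 (A : E →L[𝕜] H) (B : E →L[𝕜] K) : E →L[𝕜] WithLp 2 (H × K) :=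
  (WithLp.prodContinuousLinearEquiv 2 𝕜 H K).symm ∘L A.prod B

theorem isClosed_range_prodL2_iff (A : E →L[𝕜] H) (B : E →L[𝕜] K) :
    IsClosed ((prodL2 A B).range : Set (WithLp 2 (H × K))) ↔
      IsClosed (Set.range fun f => (A f, B f)) := by
  rw [LinearMap.coe_range, coe_coe, prodL2, coe_comp, Set.range_comp]
  exact (WithLp.prodContinuousLinearEquiv 2 𝕜 H K).symm.toHomeomorph.isClosed_image

variable [CompleteSpace E] [CompleteSpace H] [CompleteSpace K]

theorem adjoint_prodL2 (A : E →L[𝕜] H) (B : E →L[𝕜] K) :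
    adjoint (prodL2 A B) =
      (adjoint A).coprod (adjoint B) ∘L (WithLp.prodContinuousLinearEquiv 2 𝕜 H K : _ →L[𝕜] _) := by
  refine ((eq_adjoint_iff _ _).2 fun p f => ?_).symm
  simp [prodL2, WithLp.prod_inner_apply, inner_add_left, adjoint_inner_left]

theorem adjoint_prodL2_comp_prodL2 (A : E →L[𝕜] H) (B : E →L[𝕜] K) :
    adjoint (prodL2 A B) ∘L prodL2 A B = adjoint A ∘L A + adjoint B ∘L B := by
  rw [adjoint_prodL2]
  ext f
  simp [prodL2]

theorem range_adjoint_prodL2 (A : E →L[𝕜] H) (B : E →L[𝕜] K) :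
    (adjoint (prodL2 A B)).range = (adjoint A).range ⊔ (adjoint B).range := by
  rw [adjoint_prodL2, ← range_coprod]
  exact LinearMap.range_comp_of_range_eq_top _ (LinearEquiv.range _)

end HilbertSum

end ContinuousLinearMap

open ContinuousLinearMap

/-- For bounded operators `A : E → H`, `B : E → K` between complex Hilbert
spaces, the following are equivalent: (i) `L(A,B) = {(A f, B f) : f ∈ E}` is a closed subspace
of `H × K`; (ii) `ran (A*A + B*B)` is closed in `E`; (iii) `ran A* + ran B*` is closed in `E`. -/
theorem LAB_closed_iff
    {E H K : Type}
    [NormedAddCommGroup E] [InnerProductSpace ℂ E] [CompleteSpace E]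
    [NormedAddCommGroup H] [InnerProductSpace ℂ H] [CompleteSpace H]
    [NormedAddCommGroup K] [InnerProductSpace ℂ K] [CompleteSpace K]
    (A : E →L[ℂ] H) (B : E →L[ℂ] K) :
    (IsClosed (Set.range fun f : E => ((A f, B f) : H × K)) ↔
      IsClosed (Set.range ⇑(adjoint A ∘L A + adjoint B ∘L B))) ∧
    (IsClosed (Set.range fun f : E => ((A f, B f) : H × K)) ↔
      IsClosed ((LinearMap.range (adjoint A : H →ₗ[ℂ] E) ⊔ LinearMap.range (adjoint B : K →ₗ[ℂ] E) :
        Submodule ℂ E) : Set E)) := by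
  rw [← isClosed_range_prodL2_iff]
  constructor
  · rw [← isClosed_range_adjoint_comp_self_iff, adjoint_prodL2_comp_prodL2]
    rfl
  · rw [← isClosed_range_adjoint_iff, range_adjoint_prodL2]
end

section
/- The following two implications hold: (i) if ker A ⊆ ker B and ran A is closed in H, then there exists c ≥ 0 such that ‖B f‖ ≤ c ‖A f‖ for all f ∈ E (i.e., the relation L(A,B) is a bounded operator); (ii) if ker B ⊆ ker A and ran B is closed in K, then there exists c ≥ 0 such that ‖A f‖ ≤ c ‖B f‖ for all f ∈ E (i.e., the inverse relation L(B,A) is a bounded operator). -/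
namespace ContinuousLinearMap

variable {𝕜 E F G : Type*} [NontriviallyNormedField 𝕜]
  [NormedAddCommGroup E] [NormedSpace 𝕜 E] [CompleteSpace E]
  [NormedAddCommGroup F] [NormedSpace 𝕜 F] [CompleteSpace F]
  [NormedAddCommGroup G] [NormedSpace 𝕜 G]

/-- Open mapping theorem for `A` viewed as a surjection onto its range, a Banach space. -/
theorem exists_preimage_norm_le_of_isClosed_range (A : E →L[𝕜] F) (hA : IsClosed (Set.range A)) :
    ∃ C > 0, ∀ f, ∃ x, A x = A f ∧ ‖x‖ ≤ C * ‖A f‖ := by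
  have : CompleteSpace (LinearMap.range (A : E →ₗ[𝕜] F)) := hA.isComplete.completeSpace_coe
  obtain ⟨C, hC, hpre⟩ := (A.rangeRestrict).exists_preimage_norm_le A.surjective_rangeRestrict
  refine ⟨C, hC, fun f => ?_⟩
  obtain ⟨x, hx, hxC⟩ := hpre (A.rangeRestrict f)
  exact ⟨x, congrArg Subtype.val hx, hxC⟩

theorem exists_norm_le_mul_norm_of_ker_le (A : E →L[𝕜] F) (B : E →L[𝕜] G)
    (hker : LinearMap.ker (A : E →ₗ[𝕜] F) ≤ LinearMap.ker (B : E →ₗ[𝕜] G))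
    (hA : IsClosed (Set.range A)) :
    ∃ c, 0 ≤ c ∧ ∀ f, ‖B f‖ ≤ c * ‖A f‖ := by
  obtain ⟨C, hC, hpre⟩ := A.exists_preimage_norm_le_of_isClosed_range hA
  refine ⟨‖B‖ * C, by positivity, fun f => ?_⟩
  obtain ⟨x, hAx, hx⟩ := hpre f
  have hBx : B x = B f := by
    simpa [sub_eq_zero] using hker (show x - f ∈ LinearMap.ker (A : E →ₗ[𝕜] F) by simp [hAx])
  calc ‖B f‖ = ‖B x‖ := by rw [hBx]
    _ ≤ ‖B‖ * ‖x‖ := B.le_opNorm x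
    _ ≤ ‖B‖ * (C * ‖A f‖) := by gcongr
    _ = ‖B‖ * C * ‖A f‖ := (mul_assoc ..).symm

end ContinuousLinearMap

/-- For bounded operators `A : E → H`, `B : E → K` between complex Hilbert
spaces: (i) if `ker A ⊆ ker B` and `ran A` is closed, then there is `c ≥ 0` with
`‖B f‖ ≤ c ‖A f‖` for all `f` (the relation `L(A,B)` is a bounded operator); (ii) if
`ker B ⊆ ker A` and `ran B` is closed, then there is `c ≥ 0` with `‖A f‖ ≤ c ‖B f‖` for all
`f` (the inverse relation `L(B,A)` is a bounded operator). -/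
theorem operatorRangeRelation_boundedness
    {E H K : Type}
    [NormedAddCommGroup E] [InnerProductSpace ℂ E] [CompleteSpace E]
    [NormedAddCommGroup H] [InnerProductSpace ℂ H] [CompleteSpace H]
    [NormedAddCommGroup K] [InnerProductSpace ℂ K] [CompleteSpace K]
    (A : E →L[ℂ] H) (B : E →L[ℂ] K) :
    (LinearMap.ker (A : E →ₗ[ℂ] H) ≤ LinearMap.ker (B : E →ₗ[ℂ] K) → IsClosed (Set.range ⇑A) →
      ∃ c : ℝ, 0 ≤ c ∧ ∀ f : E, ‖B f‖ ≤ c * ‖A f‖) ∧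
    (LinearMap.ker (B : E →ₗ[ℂ] K) ≤ LinearMap.ker (A : E →ₗ[ℂ] H) → IsClosed (Set.range ⇑B) →
      ∃ c : ℝ, 0 ≤ c ∧ ∀ f : E, ‖A f‖ ≤ c * ‖B f‖) :=
  ⟨A.exists_norm_le_mul_norm_of_ker_le B, B.exists_norm_le_mul_norm_of_ker_le A⟩
end

section
/- Assume A*A + B*B = Q, where Q is an orthogonal projection in E (Q = Q* = Q²). Then L(A,B) is a closed subspace of H × K, the orthogonal projection of H × K onto L(A,B) is the map (h,k) ↦ (A A* h + A B* k, B A* h + B B* k), and the orthogonal projection of K × H onto the adjoint relation L(A,B)* = {(k,h) ∈ K × H : B* k = A* h} is the map (k,h) ↦ ((I − B B*) k + B A* h, A B* k + (I − A A*) h). -/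
open ContinuousLinearMap
open scoped InnerProductSpace

/-! Write `P := A*A + B*B`. Since `‖A f‖² + ‖B f‖² = Re ⟪P f, f⟫`, both `A` and `B` vanish
on `ker P ∋ f - P f`, so idempotency of `P` gives `A P = A`, `B P = B` and, taking adjoints,
`P A* = A*`, `P B* = B*`. Hence `L(A,B)` is the fixed-point set of the continuous map
`(h, k) ↦ (A g, B g)` with `g = A* h + B* k`, and the residual of that map is orthogonal to
`L(A,B)` because `A* (h - A g) + B* (k - B g) = g - P g = 0`. For the adjoint relation the
residual is `(B u, -A u)` with `u = B* k - A* h`, orthogonal to every `(k', h')` with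
`B* k' = A* h'`. -/

namespace ContinuousLinearMap

variable {𝕜 E H K : Type*} [RCLike 𝕜]
  [NormedAddCommGroup E] [InnerProductSpace 𝕜 E] [CompleteSpace E]
  [NormedAddCommGroup H] [InnerProductSpace 𝕜 H] [CompleteSpace H]
  [NormedAddCommGroup K] [InnerProductSpace 𝕜 K] [CompleteSpace K]
  (A : E →L[𝕜] H) (B : E →L[𝕜] K)

lemma norm_sq_add_norm_sq_eq_re_inner_adjoint_comp_add (f : E) :
    ‖A f‖ ^ 2 + ‖B f‖ ^ 2 =
      RCLike.re ⟪(adjoint A ∘L A + adjoint B ∘L B) f, f⟫_𝕜 := by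
  rw [apply_norm_sq_eq_inner_adjoint_left, apply_norm_sq_eq_inner_adjoint_left, add_apply,
    inner_add_left, map_add]

lemma apply_eq_zero_of_adjoint_comp_add_apply_eq_zero {f : E}
    (hf : (adjoint A ∘L A + adjoint B ∘L B) f = 0) : A f = 0 ∧ B f = 0 := by
  have h := norm_sq_add_norm_sq_eq_re_inner_adjoint_comp_add A B f
  rw [hf, inner_zero_left, map_zero] at h
  constructor <;> rw [← norm_eq_zero] <;> nlinarith [sq_nonneg ‖A f‖, sq_nonneg ‖B f‖]

lemma adjoint_adjoint_comp_add : adjoint (adjoint A ∘L A + adjoint B ∘L B) =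
    adjoint A ∘L A + adjoint B ∘L B := by
  simp only [map_add, adjoint_comp, adjoint_adjoint]

variable {A B}

lemma comp_adjoint_comp_add_left (hP : IsIdempotentElem (adjoint A ∘L A + adjoint B ∘L B)) :
    A ∘L (adjoint A ∘L A + adjoint B ∘L B) = A := by
  ext f
  have hPf :
      (adjoint A ∘L A + adjoint B ∘L B) (f - (adjoint A ∘L A + adjoint B ∘L B) f) = 0 := by
    rw [map_sub, ← comp_apply, ← mul_def, hP.eq, sub_self]
  have := (apply_eq_zero_of_adjoint_comp_add_apply_eq_zero A B hPf).1
  rwa [map_sub, sub_eq_zero, eq_comm] at this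

lemma comp_adjoint_comp_add_right (hP : IsIdempotentElem (adjoint A ∘L A + adjoint B ∘L B)) :
    B ∘L (adjoint A ∘L A + adjoint B ∘L B) = B := by
  rw [add_comm] at hP ⊢
  exact comp_adjoint_comp_add_left hP

lemma adjoint_comp_add_comp_adjoint_left (hP : IsIdempotentElem (adjoint A ∘L A + adjoint B ∘L B)) :
    (adjoint A ∘L A + adjoint B ∘L B) ∘L adjoint A = adjoint A := by
  conv_rhs => rw [← comp_adjoint_comp_add_left hP]
  rw [adjoint_comp, adjoint_adjoint_comp_add]

lemma adjoint_comp_add_comp_adjoint_right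
    (hP : IsIdempotentElem (adjoint A ∘L A + adjoint B ∘L B)) :
    (adjoint A ∘L A + adjoint B ∘L B) ∘L adjoint B = adjoint B := by
  rw [add_comm] at hP ⊢
  exact adjoint_comp_add_comp_adjoint_left hP

lemma range_prodMk_eq (hP : IsIdempotentElem (adjoint A ∘L A + adjoint B ∘L B)) :
    Set.range (fun f => (A f, B f)) =
      {p : H × K |
        (A (adjoint A p.1 + adjoint B p.2), B (adjoint A p.1 + adjoint B p.2)) = p} := by
  ext p
  constructor
  · rintro ⟨f, rfl⟩
    exact Prod.ext congr($(comp_adjoint_comp_add_left hP) f)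
      congr($(comp_adjoint_comp_add_right hP) f)
  · intro hp
    exact ⟨_, hp⟩

lemma isClosed_range_prodMk (hP : IsIdempotentElem (adjoint A ∘L A + adjoint B ∘L B)) :
    IsClosed (Set.range fun f => (A f, B f)) := by
  rw [range_prodMk_eq hP]
  exact isClosed_eq (by fun_prop) continuous_id

lemma inner_add_inner_apply_eq_inner_adjoint_add (h : H) (k : K) (f : E) :
    ⟪h, A f⟫_𝕜 + ⟪k, B f⟫_𝕜 = ⟪adjoint A h + adjoint B k, f⟫_𝕜 := by
  rw [inner_add_left, adjoint_inner_left, adjoint_inner_left]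

lemma adjoint_add_adjoint_sub_eq_zero (hP : IsIdempotentElem (adjoint A ∘L A + adjoint B ∘L B))
    (h : H) (k : K) :
    adjoint A (h - A (adjoint A h + adjoint B k)) +
      adjoint B (k - B (adjoint A h + adjoint B k)) = 0 := by
  have hA := congr($(adjoint_comp_add_comp_adjoint_left hP) h)
  have hB := congr($(adjoint_comp_add_comp_adjoint_right hP) k)
  simp only [comp_apply, add_apply, map_add, map_sub] at hA hB ⊢
  linear_combination (norm := module) -hA - hB

lemma adjoint_apply_eq_adjoint_apply_of_isIdempotentElem
    (hP : IsIdempotentElem (adjoint A ∘L A + adjoint B ∘L B)) (k : K) (h : H) :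
    adjoint B ((k - B (adjoint B k)) + B (adjoint A h)) =
      adjoint A (A (adjoint B k) + (h - A (adjoint A h))) := by
  have hA := congr($(adjoint_comp_add_comp_adjoint_left hP) h)
  have hB := congr($(adjoint_comp_add_comp_adjoint_right hP) k)
  simp only [comp_apply, add_apply, map_add, map_sub] at hA hB ⊢
  linear_combination (norm := module) hA - hB

lemma inner_sub_add_inner_sub_eq_zero (k : K) (h : H) {q : K × H}
    (hq : adjoint B q.1 = adjoint A q.2) :
    ⟪k - ((k - B (adjoint B k)) + B (adjoint A h)), q.1⟫_𝕜 +
      ⟪h - (A (adjoint B k) + (h - A (adjoint A h))), q.2⟫_𝕜 = 0 := by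
  have hk : k - ((k - B (adjoint B k)) + B (adjoint A h)) = B (adjoint B k - adjoint A h) := by
    rw [map_sub]; abel
  have hh : h - (A (adjoint B k) + (h - A (adjoint A h))) = -A (adjoint B k - adjoint A h) := by
    rw [map_sub]; abel
  rw [hk, hh, inner_neg_left, ← adjoint_inner_right, hq, adjoint_inner_right, add_neg_cancel]

end ContinuousLinearMap

theorem projection_onto_LAB_of_normalizedQ_general
    {E H K : Type}
    [NormedAddCommGroup E] [InnerProductSpace ℂ E] [CompleteSpace E]
    [NormedAddCommGroup H] [InnerProductSpace ℂ H] [CompleteSpace H]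
    [NormedAddCommGroup K] [InnerProductSpace ℂ K] [CompleteSpace K]
    (A : E →L[ℂ] H) (B : E →L[ℂ] K) (Q : E →L[ℂ] E)
    (hQ : adjoint A ∘L A + adjoint B ∘L B = Q)
    (hQidem : Q ∘L Q = Q) :
    IsClosed (Set.range fun f : E => ((A f, B f) : H × K)) ∧
    (∀ p : H × K,
      ((A (adjoint A p.1) + A (adjoint B p.2),
        B (adjoint A p.1) + B (adjoint B p.2)) : H × K)
          ∈ Set.range (fun f : E => ((A f, B f) : H × K)) ∧
      ∀ q ∈ Set.range (fun f : E => ((A f, B f) : H × K)),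
        ⟪p.1 - (A (adjoint A p.1) + A (adjoint B p.2)), q.1⟫_ℂ +
          ⟪p.2 - (B (adjoint A p.1) + B (adjoint B p.2)), q.2⟫_ℂ = 0) ∧
    (∀ p : K × H,
      (((p.1 - B (adjoint B p.1)) + B (adjoint A p.2),
        A (adjoint B p.1) + (p.2 - A (adjoint A p.2))) : K × H)
          ∈ {q : K × H | adjoint B q.1 = adjoint A q.2} ∧
      ∀ q ∈ {q : K × H | adjoint B q.1 = adjoint A q.2},
        ⟪p.1 - ((p.1 - B (adjoint B p.1)) + B (adjoint A p.2)), q.1⟫_ℂ +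
          ⟪p.2 - (A (adjoint B p.1) + (p.2 - A (adjoint A p.2))), q.2⟫_ℂ = 0) := by
  have hP : IsIdempotentElem (adjoint A ∘L A + adjoint B ∘L B) := hQ ▸ hQidem
  refine ⟨isClosed_range_prodMk hP, fun p => ⟨?_, ?_⟩, fun p => ⟨?_, ?_⟩⟩
  · exact ⟨adjoint A p.1 + adjoint B p.2, by simp only [map_add]⟩
  · rintro _ ⟨f, rfl⟩
    simp only [← map_add]
    rw [inner_add_inner_apply_eq_inner_adjoint_add, adjoint_add_adjoint_sub_eq_zero hP,
      inner_zero_left]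
  · exact adjoint_apply_eq_adjoint_apply_of_isIdempotentElem hP p.1 p.2
  · exact fun q hq => inner_sub_add_inner_sub_eq_zero p.1 p.2 hq

/-- Assume `A*A + B*B = Q` with `Q` an orthogonal projection in `E`
(`Q = Q* = Q²`). Then `L(A,B)` is a closed subspace of `H × K`, the orthogonal projection of
`H × K` onto `L(A,B)` is `(h,k) ↦ (A A* h + A B* k, B A* h + B B* k)` (i.e. this vector lies
in `L(A,B)` and the difference is orthogonal to `L(A,B)`, where the inner product on a product
of Hilbert spaces is the sum of the componentwise inner products), and the orthogonal
projection of `K × H` onto the adjoint relation `L(A,B)* = {(k,h) : B* k = A* h}` is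
`(k,h) ↦ ((I − B B*) k + B A* h, A B* k + (I − A A*) h)`. -/
theorem projection_onto_LAB_of_normalizedQ
    {E H K : Type}
    [NormedAddCommGroup E] [InnerProductSpace ℂ E] [CompleteSpace E]
    [NormedAddCommGroup H] [InnerProductSpace ℂ H] [CompleteSpace H]
    [NormedAddCommGroup K] [InnerProductSpace ℂ K] [CompleteSpace K]
    (A : E →L[ℂ] H) (B : E →L[ℂ] K) (Q : E →L[ℂ] E)
    (hQ : adjoint A ∘L A + adjoint B ∘L B = Q)
    (hQsa : adjoint Q = Q) (hQidem : Q ∘L Q = Q) :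
    IsClosed (Set.range fun f : E => ((A f, B f) : H × K)) ∧
    (∀ p : H × K,
      ((A (adjoint A p.1) + A (adjoint B p.2),
        B (adjoint A p.1) + B (adjoint B p.2)) : H × K)
          ∈ Set.range (fun f : E => ((A f, B f) : H × K)) ∧
      ∀ q ∈ Set.range (fun f : E => ((A f, B f) : H × K)),
        ⟪p.1 - (A (adjoint A p.1) + A (adjoint B p.2)), q.1⟫_ℂ +
          ⟪p.2 - (B (adjoint A p.1) + B (adjoint B p.2)), q.2⟫_ℂ = 0) ∧
    (∀ p : K × H,
      (((p.1 - B (adjoint B p.1)) + B (adjoint A p.2),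
        A (adjoint B p.1) + (p.2 - A (adjoint A p.2))) : K × H)
          ∈ {q : K × H | adjoint B q.1 = adjoint A q.2} ∧
      ∀ q ∈ {q : K × H | adjoint B q.1 = adjoint A q.2},
        ⟪p.1 - ((p.1 - B (adjoint B p.1)) + B (adjoint A p.2)), q.1⟫_ℂ +
          ⟪p.2 - (A (adjoint B p.1) + (p.2 - A (adjoint A p.2))), q.2⟫_ℂ = 0) :=
  projection_onto_LAB_of_normalizedQ_general A B Q hQ hQidem
end

section
/- If the subspace L(A,B) is closed in H × K, then there exist a complex Hilbert space E0 and bounded linear operators A' : E0 → H and B' : E0 → K such that A'*A' + B'*B' = I (the identity on E0) and {(A' g, B' g) : g ∈ E0} = L(A,B); that is, every closed operator range relation can be represented by a normalized pair. -/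
open ContinuousLinearMap

/-- A representation of a subset `L` of `H × K` by a *normalized pair* of bounded operators:
a complex Hilbert space `E0` and bounded operators `A' : E0 → H`, `B' : E0 → K` with
`A'*A' + B'*B' = I` whose joint range is `L`. -/
structure NormalizedPairRep
    (H K : Type)
    [NormedAddCommGroup H] [InnerProductSpace ℂ H] [CompleteSpace H]
    [NormedAddCommGroup K] [InnerProductSpace ℂ K] [CompleteSpace K]
    (L : Set (H × K)) where
  E0 : Type
  [nacg : NormedAddCommGroup E0]
  [ips : InnerProductSpace ℂ E0]
  [cs : CompleteSpace E0]
  A' : E0 →L[ℂ] H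
  B' : E0 →L[ℂ] K
  normalized : adjoint A' ∘L A' + adjoint B' ∘L B' = ContinuousLinearMap.id ℂ E0
  rep : Set.range (fun g : E0 => ((A' g, B' g) : H × K)) = L

/-!
A closed subspace `L` of `H × K` is represented by the two coordinate projections restricted
to `L`, once `L` is viewed inside the ℓ² product `H ⊕₂ K`: there the inner product is
`⟪g, v⟫ = ⟪g.1, v.1⟫ + ⟪g.2, v.2⟫`, which says exactly `A'*A' + B'*B' = I`.
-/

theorem WithLp.adjoint_fstL_comp_add_adjoint_sndL_comp
    {𝕜 E F : Type*} [RCLike 𝕜]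
    [NormedAddCommGroup E] [InnerProductSpace 𝕜 E] [CompleteSpace E]
    [NormedAddCommGroup F] [InnerProductSpace 𝕜 F] [CompleteSpace F]
    (S : Submodule 𝕜 (WithLp 2 (E × F))) [CompleteSpace S] :
    adjoint (fstL 2 𝕜 E F ∘L S.subtypeL) ∘L (fstL 2 𝕜 E F ∘L S.subtypeL) +
      adjoint (sndL 2 𝕜 E F ∘L S.subtypeL) ∘L (sndL 2 𝕜 E F ∘L S.subtypeL) =
        ContinuousLinearMap.id 𝕜 S := by
  ext g : 1
  refine ext_inner_right 𝕜 fun v => ?_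
  simp [inner_add_left, adjoint_inner_left, Submodule.coe_inner]

noncomputable def NormalizedPairRep.ofIsClosed
    {H K : Type}
    [NormedAddCommGroup H] [InnerProductSpace ℂ H] [CompleteSpace H]
    [NormedAddCommGroup K] [InnerProductSpace ℂ K] [CompleteSpace K]
    (L : Submodule ℂ (H × K)) (hL : IsClosed (L : Set (H × K))) :
    NormalizedPairRep H K L :=
  let S := L.comap (WithLp.linearEquiv 2 ℂ (H × K)).toLinearMap
  have : CompleteSpace S :=
    (hL.preimage (WithLp.prod_continuous_ofLp 2 H K)).completeSpace_coe
  { E0 := S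
    A' := WithLp.fstL 2 ℂ H K ∘L S.subtypeL
    B' := WithLp.sndL 2 ℂ H K ∘L S.subtypeL
    normalized := WithLp.adjoint_fstL_comp_add_adjoint_sndL_comp S
    rep := by
      ext x
      exact ⟨fun ⟨g, hg⟩ => hg ▸ g.2, fun hx => ⟨⟨WithLp.toLp 2 x, hx⟩, rfl⟩⟩ }

theorem closed_LAB_normalized_pair_general
    {E H K : Type}
    [NormedAddCommGroup E] [InnerProductSpace ℂ E]
    [NormedAddCommGroup H] [InnerProductSpace ℂ H] [CompleteSpace H]
    [NormedAddCommGroup K] [InnerProductSpace ℂ K] [CompleteSpace K]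
    (A : E →L[ℂ] H) (B : E →L[ℂ] K)
    (hclosed : IsClosed (Set.range fun f : E => ((A f, B f) : H × K))) :
    Nonempty (NormalizedPairRep H K (Set.range fun f : E => ((A f, B f) : H × K))) :=
  ⟨.ofIsClosed (LinearMap.range (A.prod B : E →ₗ[ℂ] H × K)) hclosed⟩

/-- If the subspace `L(A,B) = {(A f, B f) : f ∈ E}` is closed in `H × K`,
then it can be represented by a normalized pair: there are a complex Hilbert space `E0` and
bounded operators `A' : E0 → H`, `B' : E0 → K` with `A'*A' + B'*B' = I` and
`{(A' g, B' g) : g ∈ E0} = L(A,B)`. -/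
theorem closed_LAB_normalized_pair
    {E H K : Type}
    [NormedAddCommGroup E] [InnerProductSpace ℂ E] [CompleteSpace E]
    [NormedAddCommGroup H] [InnerProductSpace ℂ H] [CompleteSpace H]
    [NormedAddCommGroup K] [InnerProductSpace ℂ K] [CompleteSpace K]
    (A : E →L[ℂ] H) (B : E →L[ℂ] K)
    (hclosed : IsClosed (Set.range fun f : E => ((A f, B f) : H × K))) :
    Nonempty (NormalizedPairRep H K (Set.range fun f : E => ((A f, B f) : H × K))) :=
  closed_LAB_normalized_pair_general A B hclosed
end

section
/- There exists a unique pair of bounded linear operators C_A : E → H and C_B : E → K such that ‖C_A‖ ≤ 1, ‖C_B‖ ≤ 1, A = C_A ∘ (A*A + B*B)^{1/2}, B = C_B ∘ (A*A + B*B)^{1/2}, and C_A f = 0 and C_B f = 0 for every f ∈ ker A ∩ ker B. -/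
/-!
Since `S` is self-adjoint, `S² = A*A + B*B` gives `‖S f‖² = ‖A f‖² + ‖B f‖²`. Hence `‖A f‖ ≤ ‖S f‖`,
`‖B f‖ ≤ ‖S f‖` and `ker A ∩ ker B = ker S = (range S)ᗮ`. By Douglas' argument, `S f ↦ A f` is a
well-defined contraction on `range S`; extend it by continuity to the closure of `range S` and
by zero on `(range S)ᗮ`. Conversely, a factor vanishing on `(range S)ᗮ` is determined on the dense
subspace `range S ⊔ (range S)ᗮ`, which gives uniqueness.
-/

open ContinuousLinearMap

namespace ContinuousLinearMap

section Factorization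

variable {𝕜 E F H : Type*} [RCLike 𝕜]
  [NormedAddCommGroup E] [NormedSpace 𝕜 E]
  [NormedAddCommGroup F] [InnerProductSpace 𝕜 F] [CompleteSpace F]
  [NormedAddCommGroup H] [NormedSpace 𝕜 H]

theorem exists_opNorm_le_comp_eq_of_norm_le [CompleteSpace H] (A : E →L[𝕜] H) (S : E →L[𝕜] F)
    {c : ℝ} (hc : 0 ≤ c) (h : ∀ x, ‖A x‖ ≤ c * ‖S x‖) :
    ∃ C : F →L[𝕜] H, ‖C‖ ≤ c ∧ A = C ∘L S ∧ ∀ y ∈ S.rangeᗮ, C y = 0 := by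
  let R := S.range.topologicalClosure
  have : CompleteSpace R := S.range.isClosed_topologicalClosure.completeSpace_coe
  let e : E →ₗ[𝕜] R := (S : E →ₗ[𝕜] F).codRestrict R fun x ↦
    S.range.le_topologicalClosure (LinearMap.mem_range_self _ x)
  have he : DenseRange e := by
    rw [DenseRange, Subtype.dense_iff, ← Set.range_comp]
    exact fun y hy ↦ hy
  let G := (A : E →ₗ[𝕜] H).extendOfNorm e
  let P := R.orthogonalProjectionOnto
  refine ⟨G ∘L P, ?_, ?_, fun y hy ↦ ?_⟩
  · calc ‖G ∘L P‖ ≤ ‖G‖ * ‖P‖ := opNorm_comp_le _ _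
      _ ≤ c * 1 := mul_le_mul (LinearMap.opNorm_extendOfNorm_le he hc h)
          R.orthogonalProjectionOnto_norm_le (norm_nonneg _) hc
      _ = c := mul_one c
  · ext x
    have hP : P (S x) = e x := R.orthogonalProjectionOnto_mem_subspace_eq_self (e x)
    simp [hP, LinearMap.extendOfNorm_eq he ⟨c, h⟩, G]
  · rw [← Submodule.orthogonal_closure] at hy
    rw [comp_apply, Submodule.orthogonalProjectionOnto_apply_of_mem_orthogonal hy, map_zero]

theorem ext_of_comp_eq_of_forall_orthogonal_range {S : E →L[𝕜] F} {C C' : F →L[𝕜] H}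
    (h : C ∘L S = C' ∘L S) (hC : ∀ y ∈ S.rangeᗮ, C y = 0) (hC' : ∀ y ∈ S.rangeᗮ, C' y = 0) :
    C = C' := by
  suffices (S.range ⊔ S.rangeᗮ).topologicalClosure ≤ (C - C').ker by
    rw [Submodule.topologicalClosure_eq_top_iff.mpr
      (by rw [← Submodule.inf_orthogonal, Submodule.inf_orthogonal_eq_bot]),
      top_le_iff, LinearMap.ker_eq_top] at this
    exact sub_eq_zero.mp (coe_injective this)
  refine Submodule.topologicalClosure_minimal _ (sup_le ?_ fun y hy ↦ ?_) (C - C').isClosed_ker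
  · rintro _ ⟨x, rfl⟩
    simpa [sub_eq_zero] using congr($h x)
  · simp [hC y hy, hC' y hy]

end Factorization

section SumOfSquares

variable {𝕜 E F G E' : Type*} [RCLike 𝕜]
  [NormedAddCommGroup E] [InnerProductSpace 𝕜 E] [CompleteSpace E]
  [NormedAddCommGroup F] [InnerProductSpace 𝕜 F] [CompleteSpace F]
  [NormedAddCommGroup G] [InnerProductSpace 𝕜 G] [CompleteSpace G]
  [NormedAddCommGroup E'] [InnerProductSpace 𝕜 E'] [CompleteSpace E']
  {A : E →L[𝕜] F} {B : E →L[𝕜] G} {S : E →L[𝕜] E'}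

theorem norm_sq_eq_add_of_adjoint_comp_self_eq
    (h : adjoint S ∘L S = adjoint A ∘L A + adjoint B ∘L B) (x : E) :
    ‖S x‖ ^ 2 = ‖A x‖ ^ 2 + ‖B x‖ ^ 2 := by
  simp only [apply_norm_sq_eq_inner_adjoint_left, h, add_apply, inner_add_left, map_add]

theorem ker_eq_ker_inf_ker_of_adjoint_comp_self_eq
    (h : adjoint S ∘L S = adjoint A ∘L A + adjoint B ∘L B) : S.ker = A.ker ⊓ B.ker := by
  ext x
  rw [LinearMap.mem_ker, Submodule.mem_inf, LinearMap.mem_ker, LinearMap.mem_ker, coe_coe, coe_coe,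
    coe_coe, ← norm_eq_zero, ← sq_eq_zero_iff, norm_sq_eq_add_of_adjoint_comp_self_eq h,
    add_eq_zero_iff_of_nonneg (sq_nonneg _) (sq_nonneg _)]
  simp

end SumOfSquares

end ContinuousLinearMap

/-- Let `S = (A*A + B*B)^{1/2}` be the (unique) positive square root of
`A*A + B*B`. There exists a unique pair of bounded operators `C_A : E → H`, `C_B : E → K`
with `‖C_A‖ ≤ 1`, `‖C_B‖ ≤ 1`, `A = C_A ∘ S`, `B = C_B ∘ S`, and `C_A f = 0`, `C_B f = 0`
for every `f ∈ ker A ∩ ker B`. -/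
theorem exists_unique_contractive_factorization
    {E H K : Type}
    [NormedAddCommGroup E] [InnerProductSpace ℂ E] [CompleteSpace E]
    [NormedAddCommGroup H] [InnerProductSpace ℂ H] [CompleteSpace H]
    [NormedAddCommGroup K] [InnerProductSpace ℂ K] [CompleteSpace K]
    (A : E →L[ℂ] H) (B : E →L[ℂ] K)
    (S : E →L[ℂ] E) (hSpos : S.IsPositive)
    (hSsq : S ∘L S = adjoint A ∘L A + adjoint B ∘L B) :
    ∃! p : (E →L[ℂ] H) × (E →L[ℂ] K),
      ‖p.1‖ ≤ 1 ∧ ‖p.2‖ ≤ 1 ∧ A = p.1 ∘L S ∧ B = p.2 ∘L S ∧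
        ∀ f ∈ LinearMap.ker (A : E →ₗ[ℂ] H) ⊓ LinearMap.ker (B : E →ₗ[ℂ] K), p.1 f = 0 ∧ p.2 f = 0 := by
  have hS : IsSelfAdjoint S := hSpos.isSelfAdjoint
  have hSS : adjoint S ∘L S = adjoint A ∘L A + adjoint B ∘L B := by rw [hS.adjoint_eq, hSsq]
  have hker : A.ker ⊓ B.ker = S.rangeᗮ := by
    rw [hS.isStarNormal.orthogonal_range, ker_eq_ker_inf_ker_of_adjoint_comp_self_eq hSS]
  have hA (f : E) : ‖A f‖ ≤ 1 * ‖S f‖ := by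
    nlinarith [norm_sq_eq_add_of_adjoint_comp_self_eq hSS f, norm_nonneg (A f), norm_nonneg (S f)]
  have hB (f : E) : ‖B f‖ ≤ 1 * ‖S f‖ := by
    nlinarith [norm_sq_eq_add_of_adjoint_comp_self_eq hSS f, norm_nonneg (B f), norm_nonneg (S f)]
  obtain ⟨CA, hCA, hACA, hCA0⟩ := exists_opNorm_le_comp_eq_of_norm_le A S zero_le_one hA
  obtain ⟨CB, hCB, hBCB, hCB0⟩ := exists_opNorm_le_comp_eq_of_norm_le B S zero_le_one hB
  refine ⟨(CA, CB), ⟨hCA, hCB, hACA, hBCB, fun f hf ↦ ?_⟩, ?_⟩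
  · rw [hker] at hf
    exact ⟨hCA0 f hf, hCB0 f hf⟩
  · rintro ⟨CA', CB'⟩ ⟨-, -, hACA', hBCB', hC'0⟩
    rw [hker] at hC'0
    exact Prod.ext
      (ext_of_comp_eq_of_forall_orthogonal_range (hACA'.symm.trans hACA)
        (fun f hf ↦ (hC'0 f hf).1) hCA0)
      (ext_of_comp_eq_of_forall_orthogonal_range (hBCB'.symm.trans hBCB)
        (fun f hf ↦ (hC'0 f hf).2) hCB0)
end

section
/- Let C_A and C_B be the operators associated with the pair (A,B). Then ker C_A ∩ ker C_B = ker A ∩ ker B, and the operator C_A* C_A + C_B* C_B is the orthogonal projection of E onto the closure of ran(A*A + B*B); in particular (C_A* C_A + C_B* C_B) h = h for all h ∈ closure(ran(A*A + B*B)) and (C_A* C_A + C_B* C_B) h = 0 for all h ∈ ker A ∩ ker B. -/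
/-!
Put `K = ker A ⊓ ker B` and `T = C_A† C_A + C_B† C_B`. From `S² = A†A + B†B` we get
`‖S f‖² = ‖A f‖² + ‖B f‖²`, so `ker S = K`, and since `S` and `A†A + B†B` are self-adjoint
the closures of their ranges are both `Kᗮ`. Substituting `A = C_A S`, `B = C_B S` gives
`S T S = S²`, so `T S f - S f` lies in `ker S = K`; it also lies in `Kᗮ`, because `T` is
self-adjoint and vanishes on `K`. Hence `T` is the identity on `range S`, hence on its closure
`Kᗮ`, and zero on `K`: it is the orthogonal projection onto `Kᗮ`, and every claim is a
property of that projection.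
-/

open ContinuousLinearMap
open scoped InnerProduct

namespace ContinuousLinearMap

variable {𝕜 E F G : Type*} [RCLike 𝕜]
  [NormedAddCommGroup E] [InnerProductSpace 𝕜 E]
  [NormedAddCommGroup F] [InnerProductSpace 𝕜 F]
  [NormedAddCommGroup G] [InnerProductSpace 𝕜 G]

theorem eq_starProjection_of_eqOn (T : E →L[𝕜] E) (U : Submodule 𝕜 E)
    [U.HasOrthogonalProjection] (hU : Set.EqOn T id U) (hUperp : Set.EqOn T 0 Uᗮ) :
    T = U.starProjection := by
  ext x
  rw [← U.starProjection_add_starProjection_orthogonal x, map_add, map_add,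
    hU (U.starProjection_apply_mem x), hUperp (Uᗮ.starProjection_apply_mem x),
    U.starProjection_eq_self_iff.mpr (U.starProjection_apply_mem x),
    U.starProjection_apply_eq_zero_iff.mpr (Uᗮ.starProjection_apply_mem x)]
  rfl

variable [CompleteSpace E] [CompleteSpace F] [CompleteSpace G]

theorem ker_adjoint_comp_self_add_adjoint_comp_self (A : E →L[𝕜] F) (B : E →L[𝕜] G) :
    (A† ∘L A + B† ∘L B).ker = A.ker ⊓ B.ker := by
  refine le_antisymm (fun f hf ↦ ?_) fun f ⟨hA, hB⟩ ↦ by simp_all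
  have hsum : ‖A f‖ ^ 2 + ‖B f‖ ^ 2 = 0 := by
    have := congrArg (fun x : E ↦ RCLike.re (inner 𝕜 x f)) (LinearMap.mem_ker.mp hf)
    simpa [inner_add_left, adjoint_inner_left, inner_self_eq_norm_sq] using this
  have hA : ‖A f‖ = 0 := by nlinarith [norm_nonneg (A f), norm_nonneg (B f)]
  have hB : ‖B f‖ = 0 := by nlinarith [norm_nonneg (A f), norm_nonneg (B f)]
  exact ⟨norm_eq_zero.mp hA, norm_eq_zero.mp hB⟩

theorem _root_.IsSelfAdjoint.closure_range {T : E →L[𝕜] E} (hT : IsSelfAdjoint T) :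
    closure (Set.range T) = (T.kerᗮ : Set E) := by
  rw [orthogonal_ker, hT.adjoint_eq, Submodule.topologicalClosure_coe]
  rfl

theorem _root_.IsSelfAdjoint.apply_mem_orthogonal_ker {T : E →L[𝕜] E} (hT : IsSelfAdjoint T)
    (x : E) : T x ∈ T.kerᗮ := by
  rw [← SetLike.mem_coe, ← hT.closure_range]
  exact subset_closure ⟨x, rfl⟩

theorem eq_starProjection_of_comp_comp_eq_comp {S T : E →L[𝕜] E} (hS : IsSelfAdjoint S)
    (hT : IsSelfAdjoint T) (hSTS : S ∘L T ∘L S = S ∘L S) (hker : S.ker ≤ T.ker) :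
    T = S.kerᗮ.starProjection := by
  have hTS : Set.EqOn T id (Set.range S) := by
    rintro _ ⟨f, rfl⟩
    have hmem_ker : T (S f) - S f ∈ S.ker := by
      simpa [sub_eq_zero] using congr($hSTS f)
    have hmem_perp : T (S f) - S f ∈ S.kerᗮ :=
      sub_mem (Submodule.orthogonal_le hker (hT.apply_mem_orthogonal_ker _))
        (hS.apply_mem_orthogonal_ker f)
    simpa [sub_eq_zero] using S.ker.disjoint_def.mp S.ker.orthogonal_disjoint _ hmem_ker hmem_perp
  refine eq_starProjection_of_eqOn T _ ?_ fun x hx ↦ ?_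
  · rw [← hS.closure_range]
    exact hTS.closure T.continuous continuous_id
  · rw [Submodule.orthogonal_orthogonal] at hx
    exact hker hx

end ContinuousLinearMap

theorem CACB_projection_properties_general
    {E H K : Type}
    [NormedAddCommGroup E] [InnerProductSpace ℂ E] [CompleteSpace E]
    [NormedAddCommGroup H] [InnerProductSpace ℂ H] [CompleteSpace H]
    [NormedAddCommGroup K] [InnerProductSpace ℂ K] [CompleteSpace K]
    (A : E →L[ℂ] H) (B : E →L[ℂ] K)
    (S : E →L[ℂ] E) (hSpos : S.IsPositive)
    (hSsq : S ∘L S = adjoint A ∘L A + adjoint B ∘L B)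
    (CA : E →L[ℂ] H) (CB : E →L[ℂ] K)
    (hA : A = CA ∘L S) (hB : B = CB ∘L S)
    (hker : ∀ f ∈ LinearMap.ker (A : E →ₗ[ℂ] H) ⊓ LinearMap.ker (B : E →ₗ[ℂ] K), CA f = 0 ∧ CB f = 0) :
    LinearMap.ker (CA : E →ₗ[ℂ] H) ⊓ LinearMap.ker (CB : E →ₗ[ℂ] K) = LinearMap.ker (A : E →ₗ[ℂ] H) ⊓ LinearMap.ker (B : E →ₗ[ℂ] K) ∧
    IsSelfAdjoint (adjoint CA ∘L CA + adjoint CB ∘L CB) ∧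
    (adjoint CA ∘L CA + adjoint CB ∘L CB) ∘L (adjoint CA ∘L CA + adjoint CB ∘L CB) =
      adjoint CA ∘L CA + adjoint CB ∘L CB ∧
    Set.range ⇑(adjoint CA ∘L CA + adjoint CB ∘L CB) =
      closure (Set.range ⇑(adjoint A ∘L A + adjoint B ∘L B)) ∧
    (∀ h ∈ closure (Set.range ⇑(adjoint A ∘L A + adjoint B ∘L B)),
      (adjoint CA ∘L CA + adjoint CB ∘L CB) h = h) ∧
    (∀ h ∈ LinearMap.ker (A : E →ₗ[ℂ] H) ⊓ LinearMap.ker (B : E →ₗ[ℂ] K),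
      (adjoint CA ∘L CA + adjoint CB ∘L CB) h = 0) := by
  have hS : IsSelfAdjoint S := hSpos.isSelfAdjoint
  have hkerS : S.ker = A.ker ⊓ B.ker := by
    rw [← ker_adjoint_comp_self S, hS.adjoint_eq, hSsq,
      ker_adjoint_comp_self_add_adjoint_comp_self]
  have hclosure : closure (Set.range (A† ∘L A + B† ∘L B)) = (S.kerᗮ : Set E) := by
    rw [((isPositive_adjoint_comp_self A).add (isPositive_adjoint_comp_self B)).isSelfAdjoint
      |>.closure_range, ker_adjoint_comp_self_add_adjoint_comp_self, hkerS]
  have hT : CA† ∘L CA + CB† ∘L CB = S.kerᗮ.starProjection := by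
    refine eq_starProjection_of_comp_comp_eq_comp hS
      ((isPositive_adjoint_comp_self CA).add (isPositive_adjoint_comp_self CB)).isSelfAdjoint
      ?_ fun f hf ↦ ?_
    · rw [hSsq, hA, hB, adjoint_comp, adjoint_comp, hS.adjoint_eq]
      simp only [add_comp, comp_add, comp_assoc]
    · obtain ⟨hCA, hCB⟩ := hker f (hkerS ▸ hf)
      simp [hCA, hCB]
  refine ⟨le_antisymm (fun f hf ↦ ?_) fun f hf ↦ hker f hf, ?_⟩
  · obtain ⟨hCA, hCB⟩ : CA f = 0 ∧ CB f = 0 := hf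
    have hTf : (CA† ∘L CA + CB† ∘L CB) f = 0 := by simp [hCA, hCB]
    rwa [hT, Submodule.starProjection_apply_eq_zero_iff, Submodule.orthogonal_orthogonal,
      hkerS] at hTf
  rw [hclosure, hT, ← hkerS]
  exact ⟨isSelfAdjoint_starProjection _, S.kerᗮ.isIdempotentElem_starProjection,
    congrArg SetLike.coe S.kerᗮ.range_starProjection,
    fun h hh ↦ Submodule.starProjection_eq_self_iff.mpr hh,
    fun h hh ↦
      (Submodule.starProjection_apply_eq_zero_iff _).mpr (S.ker.le_orthogonal_orthogonal hh)⟩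

/-- Let `S = (A*A + B*B)^{1/2}` be the positive square root and let `C_A`,
`C_B` be the unique contractions with `A = C_A ∘ S`, `B = C_B ∘ S` vanishing on
`ker A ∩ ker B`. Then `ker C_A ∩ ker C_B = ker A ∩ ker B` and `C_A* C_A + C_B* C_B` is the
orthogonal projection of `E` onto the closure of `ran (A*A + B*B)` (it is selfadjoint,
idempotent and its range is that closure); in particular it is the identity on
`closure (ran (A*A + B*B))` and vanishes on `ker A ∩ ker B`. -/
theorem CACB_projection_properties
    {E H K : Type}
    [NormedAddCommGroup E] [InnerProductSpace ℂ E] [CompleteSpace E]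
    [NormedAddCommGroup H] [InnerProductSpace ℂ H] [CompleteSpace H]
    [NormedAddCommGroup K] [InnerProductSpace ℂ K] [CompleteSpace K]
    (A : E →L[ℂ] H) (B : E →L[ℂ] K)
    (S : E →L[ℂ] E) (hSpos : S.IsPositive)
    (hSsq : S ∘L S = adjoint A ∘L A + adjoint B ∘L B)
    (CA : E →L[ℂ] H) (CB : E →L[ℂ] K)
    (hCAnorm : ‖CA‖ ≤ 1) (hCBnorm : ‖CB‖ ≤ 1)
    (hA : A = CA ∘L S) (hB : B = CB ∘L S)
    (hker : ∀ f ∈ LinearMap.ker (A : E →ₗ[ℂ] H) ⊓ LinearMap.ker (B : E →ₗ[ℂ] K), CA f = 0 ∧ CB f = 0) :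
    LinearMap.ker (CA : E →ₗ[ℂ] H) ⊓ LinearMap.ker (CB : E →ₗ[ℂ] K) = LinearMap.ker (A : E →ₗ[ℂ] H) ⊓ LinearMap.ker (B : E →ₗ[ℂ] K) ∧
    IsSelfAdjoint (adjoint CA ∘L CA + adjoint CB ∘L CB) ∧
    (adjoint CA ∘L CA + adjoint CB ∘L CB) ∘L (adjoint CA ∘L CA + adjoint CB ∘L CB) =
      adjoint CA ∘L CA + adjoint CB ∘L CB ∧
    Set.range ⇑(adjoint CA ∘L CA + adjoint CB ∘L CB) =
      closure (Set.range ⇑(adjoint A ∘L A + adjoint B ∘L B)) ∧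
    (∀ h ∈ closure (Set.range ⇑(adjoint A ∘L A + adjoint B ∘L B)),
      (adjoint CA ∘L CA + adjoint CB ∘L CB) h = h) ∧
    (∀ h ∈ LinearMap.ker (A : E →ₗ[ℂ] H) ⊓ LinearMap.ker (B : E →ₗ[ℂ] K),
      (adjoint CA ∘L CA + adjoint CB ∘L CB) h = 0) :=
  CACB_projection_properties_general A B S hSpos hSsq CA CB hA hB hker
end

section
/- Let C_A and C_B be the operators associated with the pair (A,B). Then the closure in H × K of the subspace L(A,B) = {(A f, B f) : f ∈ E} equals {(C_A φ, C_B φ) : φ ∈ E}; moreover, for every φ ∈ (ker C_A)⊥ and ψ ∈ ker C_A one has ⟨C_B φ, C_B ψ⟩ = 0, so that the multivalued part of the closure is C_B(ker C_A) and the orthogonal operator part of the closure is {(C_A φ, C_B φ) : φ ∈ (ker C_A)⊥}. -/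
open ContinuousLinearMap
open scoped InnerProductSpace

/-! Put `T = (C_A, C_B)`, so that `(A, B) = T ∘ S`. Since `S` is self-adjoint, `S² = A*A + B*B`
reads `S (C_A*C_A + C_B*C_B) S = S²`, and as `C_A`, `C_B` vanish on `ker S` this forces
`C_A*C_A + C_B*C_B` to be the identity on `(ker S)ᗮ = closure (range S)`. Hence
`‖C_A x‖² + ‖C_B x‖² = ‖x‖²` there, so `T` is bounded below on `(ker S)ᗮ` and maps it onto a
closed set, which is then the closure of `T '' range S = L(A,B)`; it is all of `range T` because
`T` kills `ker S`. The same identity gives `⟪C_B φ, C_B ψ⟫ = ⟪φ, ψ⟫ - ⟪C_A φ, C_A ψ⟫ = 0` for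
`φ ⊥ ker C_A ⊇ ker S` and `ψ ∈ ker C_A`, and the multivalued and operator parts of `range T` are
read off from that. -/

namespace ContinuousLinearMap

variable {𝕜 E F G : Type*} [RCLike 𝕜]
  [NormedAddCommGroup E] [InnerProductSpace 𝕜 E]
  [NormedAddCommGroup F] [InnerProductSpace 𝕜 F]
  [NormedAddCommGroup G] [InnerProductSpace 𝕜 G]

theorem range_eq_image_orthogonal {M : Type*} [AddCommGroup M] [Module 𝕜 M] [TopologicalSpace M]
    (T : E →L[𝕜] M) {U : Submodule 𝕜 E} [U.HasOrthogonalProjection] (hU : U ≤ T.ker) :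
    Set.range T = T '' Uᗮ := by
  refine subset_antisymm ?_ (Set.image_subset_range _ _)
  rintro _ ⟨x, rfl⟩
  obtain ⟨y, hy, z, hz, rfl⟩ := U.exists_add_mem_mem_orthogonal x
  have hTy : T y = 0 := hU hy
  exact ⟨z, hz, by rw [map_add, hTy, zero_add]⟩

theorem isClosed_image_of_le_mul_norm [CompleteSpace E] {M : Type*} [NormedAddCommGroup M]
    [NormedSpace 𝕜 M] (T : E →L[𝕜] M) {V : Submodule 𝕜 E} (hV : IsClosed (V : Set E))
    (C : NNReal) (hC : ∀ x ∈ V, ‖x‖ ≤ C * ‖T x‖) : IsClosed (T '' V) := by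
  have : CompleteSpace V := hV.completeSpace_coe
  have hanti : AntilipschitzWith C (T ∘L V.subtypeL) :=
    (T ∘L V.subtypeL).antilipschitz_of_bound fun x ↦ hC x x.2
  convert hanti.isClosed_range (T ∘L V.subtypeL).uniformContinuous using 1
  ext; simp

theorem _root_.IsSelfAdjoint.orthogonal_ker_eq [CompleteSpace E] {S : E →L[𝕜] E}
    (hS : IsSelfAdjoint S) : S.kerᗮ = S.range.topologicalClosure := by
  simpa [hS.adjoint_eq] using S.orthogonal_ker

section Factorization

variable [CompleteSpace E] [CompleteSpace F] [CompleteSpace G]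
  {S : E →L[𝕜] E} {CA : E →L[𝕜] F} {CB : E →L[𝕜] G}

theorem comp_gram_comp_eq_comp_self (hS : IsSelfAdjoint S)
    (hsq : S ∘L S = adjoint (CA ∘L S) ∘L (CA ∘L S) + adjoint (CB ∘L S) ∘L (CB ∘L S)) :
    S ∘L (adjoint CA ∘L CA + adjoint CB ∘L CB) ∘L S = S ∘L S := by
  rw [hsq, adjoint_comp, adjoint_comp, hS.adjoint_eq]
  ext x
  simp

theorem gram_apply_eq_self_of_mem_orthogonal_ker (hS : IsSelfAdjoint S)
    (hsq : S ∘L S = adjoint (CA ∘L S) ∘L (CA ∘L S) + adjoint (CB ∘L S) ∘L (CB ∘L S))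
    (hker : S.ker ≤ CA.ker ⊓ CB.ker) {x : E} (hx : x ∈ S.kerᗮ) :
    (adjoint CA ∘L CA + adjoint CB ∘L CB) x = x := by
  suffices S.range ≤ (adjoint CA ∘L CA + adjoint CB ∘L CB - 1).ker by
    rw [hS.orthogonal_ker_eq] at hx
    simpa [sub_eq_zero] using Submodule.topologicalClosure_minimal _ this (isClosed_ker _) hx
  rintro _ ⟨f, rfl⟩
  set u := (adjoint CA ∘L CA + adjoint CB ∘L CB) (S f) - S f
  have hu_ker : u ∈ S.ker := by
    have h := congr($(comp_gram_comp_eq_comp_self hS hsq) f)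
    simp only [comp_apply] at h
    rw [LinearMap.mem_ker, coe_coe, map_sub, h, sub_self]
  have hu_orth : u ∈ S.kerᗮ := by
    intro k hk
    obtain ⟨hkA, hkB⟩ := hker hk
    have hkS : S k = 0 := hk
    have hkA : CA k = 0 := hkA
    have hkB : CB k = 0 := hkB
    rw [inner_sub_right, add_apply, inner_add_right, comp_apply, comp_apply, adjoint_inner_right,
      adjoint_inner_right, hkA, hkB, ← hS.adjoint_eq, adjoint_inner_right, hS.adjoint_eq, hkS]
    simp
  have hu : u = 0 := by
    simpa [S.ker.inf_orthogonal_eq_bot] using Submodule.mem_inf.mpr ⟨hu_ker, hu_orth⟩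
  simpa [u, sub_eq_zero] using hu

theorem inner_add_inner_eq_inner_of_mem_orthogonal_ker (hS : IsSelfAdjoint S)
    (hsq : S ∘L S = adjoint (CA ∘L S) ∘L (CA ∘L S) + adjoint (CB ∘L S) ∘L (CB ∘L S))
    (hker : S.ker ≤ CA.ker ⊓ CB.ker) {x : E} (hx : x ∈ S.kerᗮ) (y : E) :
    ⟪CA x, CA y⟫_𝕜 + ⟪CB x, CB y⟫_𝕜 = ⟪x, y⟫_𝕜 := by
  conv_rhs => rw [← gram_apply_eq_self_of_mem_orthogonal_ker hS hsq hker hx]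
  rw [add_apply, inner_add_left, comp_apply, comp_apply, adjoint_inner_left, adjoint_inner_left]

theorem norm_le_norm_add_norm_of_mem_orthogonal_ker (hS : IsSelfAdjoint S)
    (hsq : S ∘L S = adjoint (CA ∘L S) ∘L (CA ∘L S) + adjoint (CB ∘L S) ∘L (CB ∘L S))
    (hker : S.ker ≤ CA.ker ⊓ CB.ker) {x : E} (hx : x ∈ S.kerᗮ) :
    ‖x‖ ≤ ‖CA x‖ + ‖CB x‖ := by
  have h := inner_add_inner_eq_inner_of_mem_orthogonal_ker hS hsq hker hx x
  simp only [inner_self_eq_norm_sq_to_K] at h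
  have h' : ‖CA x‖ ^ 2 + ‖CB x‖ ^ 2 = ‖x‖ ^ 2 := by exact_mod_cast h
  nlinarith [norm_nonneg x, norm_nonneg (CA x), norm_nonneg (CB x)]

theorem inner_eq_zero_of_mem_orthogonal_ker_of_mem_ker (hS : IsSelfAdjoint S)
    (hsq : S ∘L S = adjoint (CA ∘L S) ∘L (CA ∘L S) + adjoint (CB ∘L S) ∘L (CB ∘L S))
    (hker : S.ker ≤ CA.ker ⊓ CB.ker) {φ ψ : E} (hφ : φ ∈ CA.kerᗮ) (hψ : ψ ∈ CA.ker) :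
    ⟪CB φ, CB ψ⟫_𝕜 = 0 := by
  have hφS : φ ∈ S.kerᗮ := Submodule.orthogonal_le (hker.trans inf_le_left) hφ
  have hCAψ : CA ψ = 0 := hψ
  have hφψ : ⟪φ, ψ⟫_𝕜 = 0 := inner_eq_zero_symm.mp (hφ ψ hψ)
  simpa [hCAψ, hφψ] using inner_add_inner_eq_inner_of_mem_orthogonal_ker hS hsq hker hφS ψ

theorem closure_range_comp_prod_eq (hS : IsSelfAdjoint S)
    (hsq : S ∘L S = adjoint (CA ∘L S) ∘L (CA ∘L S) + adjoint (CB ∘L S) ∘L (CB ∘L S))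
    (hker : S.ker ≤ CA.ker ⊓ CB.ker) :
    closure (Set.range fun f ↦ ((CA ∘L S) f, (CB ∘L S) f)) = Set.range fun φ ↦ (CA φ, CB φ) := by
  set T := CA.prod CB
  have hrange : (Set.range fun f ↦ ((CA ∘L S) f, (CB ∘L S) f)) = T '' S.range := by
    rw [LinearMap.coe_range, coe_coe, ← Set.range_comp]
    rfl
  have hclosure : (S.kerᗮ : Set E) = closure S.range := by
    rw [hS.orthogonal_ker_eq, Submodule.topologicalClosure_coe]
  have hbound : ∀ x ∈ S.kerᗮ, ‖x‖ ≤ 2 * ‖T x‖ := fun x hx ↦ by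
    have hA : ‖CA x‖ ≤ ‖T x‖ := _root_.norm_fst_le (T x)
    have hB : ‖CB x‖ ≤ ‖T x‖ := _root_.norm_snd_le (T x)
    linarith [norm_le_norm_add_norm_of_mem_orthogonal_ker hS hsq hker hx]
  have hclosed : IsClosed (T '' closure S.range) := by
    rw [← hclosure]
    exact isClosed_image_of_le_mul_norm T (Submodule.isClosed_orthogonal _) 2 hbound
  rw [hrange, ← closure_image_closure T.continuous, hclosed.closure_eq, ← hclosure,
    ← range_eq_image_orthogonal T (by rwa [ker_prod])]
  rfl

end Factorization

end ContinuousLinearMap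

section LinearRelation

variable {𝕜 H K : Type*} [RCLike 𝕜] [NormedAddCommGroup K] [InnerProductSpace 𝕜 K]

def multivaluedPart [Zero H] (L : Set (H × K)) : Set K := {k | ((0 : H), k) ∈ L}

variable (𝕜) in
def operatorPart [Zero H] (L : Set (H × K)) : Set (H × K) :=
  {p | p ∈ L ∧ ∀ k ∈ multivaluedPart L, ⟪p.2, k⟫_𝕜 = 0}

variable {E : Type*} [NormedAddCommGroup E] [InnerProductSpace 𝕜 E]
  [NormedAddCommGroup H] [NormedSpace 𝕜 H] (CA : E →L[𝕜] H) (CB : E →L[𝕜] K)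

theorem multivaluedPart_range_prod :
    multivaluedPart (Set.range fun φ ↦ (CA φ, CB φ)) = CB '' CA.ker := by
  ext k
  simp [multivaluedPart, eq_comm]

theorem operatorPart_range_prod [CompleteSpace E]
    (horth : ∀ φ ∈ CA.kerᗮ, ∀ ψ ∈ CA.ker, ⟪CB φ, CB ψ⟫_𝕜 = 0) :
    operatorPart 𝕜 (Set.range fun φ ↦ (CA φ, CB φ)) = {p | ∃ φ ∈ CA.kerᗮ, p = (CA φ, CB φ)} := by
  rw [operatorPart, multivaluedPart_range_prod]
  ext p
  constructor
  · rintro ⟨⟨φ, rfl⟩, hperp⟩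
    obtain ⟨φ₀, hφ₀, φ₁, hφ₁, rfl⟩ := CA.ker.exists_add_mem_mem_orthogonal φ
    have hCAφ₀ : CA φ₀ = 0 := hφ₀
    have hCBφ₀ : CB φ₀ = 0 := by
      have h : ⟪CB (φ₀ + φ₁), CB φ₀⟫_𝕜 = 0 := hperp (CB φ₀) ⟨φ₀, hφ₀, rfl⟩
      rw [map_add, inner_add_left, horth φ₁ hφ₁ φ₀ hφ₀, add_zero] at h
      exact inner_self_eq_zero.mp h
    exact ⟨φ₁, hφ₁, by simp [hCAφ₀, hCBφ₀]⟩
  · rintro ⟨φ, hφ, rfl⟩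
    exact ⟨⟨φ, rfl⟩, fun _ ⟨ψ, hψ, hk⟩ ↦ hk ▸ horth φ hφ ψ hψ⟩

end LinearRelation

theorem closure_LAB_eq_LCACB_general
    {E H K : Type}
    [NormedAddCommGroup E] [InnerProductSpace ℂ E] [CompleteSpace E]
    [NormedAddCommGroup H] [InnerProductSpace ℂ H] [CompleteSpace H]
    [NormedAddCommGroup K] [InnerProductSpace ℂ K] [CompleteSpace K]
    (A : E →L[ℂ] H) (B : E →L[ℂ] K)
    (S : E →L[ℂ] E) (hSpos : S.IsPositive)
    (hSsq : S ∘L S = adjoint A ∘L A + adjoint B ∘L B)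
    (CA : E →L[ℂ] H) (CB : E →L[ℂ] K)
    (hA : A = CA ∘L S) (hB : B = CB ∘L S)
    (hker : ∀ f ∈ LinearMap.ker (A : E →ₗ[ℂ] H) ⊓ LinearMap.ker (B : E →ₗ[ℂ] K), CA f = 0 ∧ CB f = 0) :
    closure (Set.range fun f : E => ((A f, B f) : H × K)) =
      Set.range (fun φ : E => ((CA φ, CB φ) : H × K)) ∧
    (∀ φ ∈ (LinearMap.ker (CA : E →ₗ[ℂ] H))ᗮ, ∀ ψ ∈ LinearMap.ker (CA : E →ₗ[ℂ] H), ⟪CB φ, CB ψ⟫_ℂ = 0) ∧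
    {k : K | ((0 : H), k) ∈ closure (Set.range fun f : E => ((A f, B f) : H × K))} =
      ⇑CB '' (LinearMap.ker (CA : E →ₗ[ℂ] H) : Set E) ∧
    {p : H × K |
        p ∈ closure (Set.range fun f : E => ((A f, B f) : H × K)) ∧
        ∀ k ∈ {k : K |
            ((0 : H), k) ∈ closure (Set.range fun f : E => ((A f, B f) : H × K))},
          ⟪p.2, k⟫_ℂ = 0} =
      {p : H × K | ∃ φ ∈ (LinearMap.ker (CA : E →ₗ[ℂ] H))ᗮ, p = (CA φ, CB φ)} := by
  subst hA hB
  have hS := hSpos.isSelfAdjoint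
  have hkerS : S.ker ≤ CA.ker ⊓ CB.ker := fun f hf ↦ by
    have hSf : S f = 0 := hf
    exact hker f ⟨by simp [hSf], by simp [hSf]⟩
  have hclosure := closure_range_comp_prod_eq hS hSsq hkerS
  have horth : ∀ φ ∈ CA.kerᗮ, ∀ ψ ∈ CA.ker, ⟪CB φ, CB ψ⟫_ℂ = 0 := fun φ hφ ψ hψ ↦
    inner_eq_zero_of_mem_orthogonal_ker_of_mem_ker hS hSsq hkerS hφ hψ
  refine ⟨hclosure, horth, ?_, ?_⟩
  · rw [hclosure]
    exact multivaluedPart_range_prod CA CB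
  · rw [hclosure]
    exact operatorPart_range_prod CA CB horth

/-- Let `S = (A*A + B*B)^{1/2}` be the positive square root and let `C_A`,
`C_B` be the unique contractions with `A = C_A ∘ S`, `B = C_B ∘ S` vanishing on
`ker A ∩ ker B`. Then the closure of `L(A,B) = {(A f, B f) : f ∈ E}` in `H × K` equals
`{(C_A φ, C_B φ) : φ ∈ E}`; moreover for every `φ ∈ (ker C_A)ᗮ` and `ψ ∈ ker C_A` one has
`⟪C_B φ, C_B ψ⟫ = 0`, the multivalued part of the closure is `C_B (ker C_A)`, and the
orthogonal operator part of the closure (the elements of the closure whose second component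
is orthogonal to the multivalued part) is `{(C_A φ, C_B φ) : φ ∈ (ker C_A)ᗮ}`. -/
theorem closure_LAB_eq_LCACB
    {E H K : Type}
    [NormedAddCommGroup E] [InnerProductSpace ℂ E] [CompleteSpace E]
    [NormedAddCommGroup H] [InnerProductSpace ℂ H] [CompleteSpace H]
    [NormedAddCommGroup K] [InnerProductSpace ℂ K] [CompleteSpace K]
    (A : E →L[ℂ] H) (B : E →L[ℂ] K)
    (S : E →L[ℂ] E) (hSpos : S.IsPositive)
    (hSsq : S ∘L S = adjoint A ∘L A + adjoint B ∘L B)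
    (CA : E →L[ℂ] H) (CB : E →L[ℂ] K)
    (hCAnorm : ‖CA‖ ≤ 1) (hCBnorm : ‖CB‖ ≤ 1)
    (hA : A = CA ∘L S) (hB : B = CB ∘L S)
    (hker : ∀ f ∈ LinearMap.ker (A : E →ₗ[ℂ] H) ⊓ LinearMap.ker (B : E →ₗ[ℂ] K), CA f = 0 ∧ CB f = 0) :
    closure (Set.range fun f : E => ((A f, B f) : H × K)) =
      Set.range (fun φ : E => ((CA φ, CB φ) : H × K)) ∧
    (∀ φ ∈ (LinearMap.ker (CA : E →ₗ[ℂ] H))ᗮ, ∀ ψ ∈ LinearMap.ker (CA : E →ₗ[ℂ] H), ⟪CB φ, CB ψ⟫_ℂ = 0) ∧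
    {k : K | ((0 : H), k) ∈ closure (Set.range fun f : E => ((A f, B f) : H × K))} =
      ⇑CB '' (LinearMap.ker (CA : E →ₗ[ℂ] H) : Set E) ∧
    {p : H × K |
        p ∈ closure (Set.range fun f : E => ((A f, B f) : H × K)) ∧
        ∀ k ∈ {k : K |
            ((0 : H), k) ∈ closure (Set.range fun f : E => ((A f, B f) : H × K))},
          ⟪p.2, k⟫_ℂ = 0} =
      {p : H × K | ∃ φ ∈ (LinearMap.ker (CA : E →ₗ[ℂ] H))ᗮ, p = (CA φ, CB φ)} :=
  closure_LAB_eq_LCACB_general A B S hSpos hSsq CA CB hA hB hker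
end

section
/- The following statements are equivalent: (i) the closure of L(A,B) in H × K equals closure(ran A) × closure(ran B) (i.e., L(A,B) is singular); (ii) D(A,B) ⊆ ker B*; (iii) R(A,B) := {h ∈ H : A* h ∈ ran B*} ⊆ ker A*; (iv) ran A* ∩ ran B* = {0}; (v) the adjoint relation {(k,h) ∈ K × H : B* k = A* h} equals ker B* × ker A*. -/
/-!
In the L² product, the closure of `ran (A, B)` is the annihilator of `ker (A, B)*`, and
`(A, B)* (h, k) = A* h + B* k`; likewise `closure (ran A) = (ker A*)ᗮ`. So `L(A, B)` is singular
exactly when `A* h + B* k = 0` forces `A* h = B* k = 0`, i.e. when `ran A* ∩ ran B* = {0}`.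
The remaining conditions are set-theoretic reformulations of this one.
-/

open ContinuousLinearMap

namespace LinearMap

variable {R M M₁ M₂ : Type*} [Semiring R] [AddCommMonoid M] [AddCommMonoid M₁]
  [AddCommMonoid M₂] [Module R M] [Module R M₁] [Module R M₂]

theorem setOf_apply_mem_range_subset_ker_iff (f : M₁ →ₗ[R] M) (g : M₂ →ₗ[R] M) :
    {y | g y ∈ Set.range f} ⊆ (ker g : Set M₂) ↔ Set.range f ∩ Set.range g = {0} := by
  constructor
  · intro h
    refine Set.eq_singleton_iff_unique_mem.mpr ⟨⟨⟨0, map_zero f⟩, ⟨0, map_zero g⟩⟩, ?_⟩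
    rintro _ ⟨hf, y, rfl⟩
    exact h hf
  · intro h y hy
    have : g y ∈ Set.range f ∩ Set.range g := ⟨hy, y, rfl⟩
    rwa [h] at this

theorem setOf_apply_eq_apply_eq_ker_prod_iff (f : M₁ →ₗ[R] M) (g : M₂ →ₗ[R] M) :
    {q : M₂ × M₁ | g q.1 = f q.2} = (ker g : Set M₂) ×ˢ (ker f : Set M₁) ↔
      Set.range f ∩ Set.range g = {0} := by
  constructor
  · intro h
    refine Set.eq_singleton_iff_unique_mem.mpr ⟨⟨⟨0, map_zero f⟩, ⟨0, map_zero g⟩⟩, ?_⟩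
    rintro _ ⟨⟨x, rfl⟩, y, hy⟩
    have : (y, x) ∈ {q : M₂ × M₁ | g q.1 = f q.2} := hy
    rw [h] at this
    exact hy ▸ this.1
  · intro h
    ext ⟨y, x⟩
    constructor
    · intro (hyx : g y = f x)
      have : g y ∈ Set.range f ∩ Set.range g := ⟨⟨x, hyx.symm⟩, y, rfl⟩
      rw [h] at this
      have hy0 : g y = 0 := this
      exact ⟨hy0, show f x = 0 from hyx ▸ hy0⟩
    · rintro ⟨(hy : g y = 0), (hx : f x = 0)⟩
      exact hy.trans hx.symm

end LinearMap

section Hilbert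

variable {𝕜 E H K : Type*} [RCLike 𝕜]
  [NormedAddCommGroup E] [InnerProductSpace 𝕜 E] [CompleteSpace E]
  [NormedAddCommGroup H] [InnerProductSpace 𝕜 H] [CompleteSpace H]
  [NormedAddCommGroup K] [InnerProductSpace 𝕜 K] [CompleteSpace K]

theorem ContinuousLinearMap.mem_closure_range_iff (T : E →L[𝕜] H) (x : H) :
    x ∈ closure (Set.range T) ↔ ∀ y, adjoint T y = 0 → inner 𝕜 y x = 0 := by
  have hcl : closure (Set.range T) = (LinearMap.range (T : E →ₗ[𝕜] H)).topologicalClosure := by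
    rw [Submodule.topologicalClosure_coe]
    rfl
  rw [hcl, SetLike.mem_coe, ← Submodule.orthogonal_orthogonal_eq_closure, orthogonal_range,
    Submodule.mem_orthogonal]
  rfl

theorem mem_closure_range_prod_iff (A : E →L[𝕜] H) (B : E →L[𝕜] K) (h : H) (k : K) :
    (h, k) ∈ closure (Set.range fun f => (A f, B f)) ↔
      ∀ h' k', adjoint A h' + adjoint B k' = 0 → inner 𝕜 h' h + inner 𝕜 k' k = 0 := by
  -- `H × K` carries the sup norm; the inner product lives on `WithLp 2 (H × K)`.
  set e := WithLp.prodContinuousLinearEquiv 2 𝕜 H K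
  set T : E →L[𝕜] WithLp 2 (H × K) := e.symm.toContinuousLinearMap ∘L A.prod B
  have hT : ∀ y, adjoint T y = adjoint A (WithLp.ofLp y).1 + adjoint B (WithLp.ofLp y).2 := by
    intro y
    refine ext_inner_left 𝕜 fun f => ?_
    simp [T, e, adjoint_inner_right, inner_add_right]
  have hL : Set.range (fun f => (A f, B f)) = e '' Set.range T := by
    rw [← Set.range_comp]
    rfl
  rw [hL, ← e.image_closure, e.image_eq_preimage_symm, Set.mem_preimage, mem_closure_range_iff]
  constructor
  · intro hx h' k' hsum
    simpa [hT, e] using hx (WithLp.toLp 2 (h', k')) (by simpa [hT] using hsum)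
  · intro hx y hy
    simpa [e] using hx _ _ (by simpa [hT] using hy)

theorem closure_range_prod_eq_iff (A : E →L[𝕜] H) (B : E →L[𝕜] K) :
    closure (Set.range fun f => (A f, B f)) = closure (Set.range A) ×ˢ closure (Set.range B) ↔
      Set.range (adjoint A) ∩ Set.range (adjoint B) = {0} := by
  constructor
  · intro hL
    refine Set.eq_singleton_iff_unique_mem.mpr ⟨⟨⟨0, map_zero _⟩, ⟨0, map_zero _⟩⟩, ?_⟩
    rintro _ ⟨⟨h', rfl⟩, k', hk'⟩
    refine ext_inner_right 𝕜 fun f => ?_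
    have hAf : (A f, (0 : K)) ∈ closure (Set.range fun f => (A f, B f)) :=
      hL ▸ ⟨subset_closure ⟨f, rfl⟩, subset_closure ⟨0, map_zero B⟩⟩
    have := (mem_closure_range_prod_iff A B _ _).mp hAf h' (-k') (by simp [hk'])
    simpa [adjoint_inner_left] using this
  · intro hAB
    refine ((closure_mono ?_).trans closure_prod_eq.subset).antisymm ?_
    · rintro _ ⟨f, rfl⟩
      exact ⟨⟨f, rfl⟩, ⟨f, rfl⟩⟩
    rintro ⟨h, k⟩ ⟨hh, hk⟩
    rw [mem_closure_range_iff] at hh hk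
    refine (mem_closure_range_prod_iff A B h k).mpr fun h' k' hsum => ?_
    have hA : adjoint A h' = 0 := by
      have : adjoint A h' ∈ Set.range (adjoint A) ∩ Set.range (adjoint B) :=
        ⟨⟨h', rfl⟩, -k', by rw [map_neg, neg_eq_of_add_eq_zero_left hsum]⟩
      rwa [hAB] at this
    have hB : adjoint B k' = 0 := by rwa [hA, zero_add] at hsum
    rw [hh h' hA, hk k' hB, add_zero]

end Hilbert

/-- The following are equivalent: (i) the closure of `L(A,B)` equals
`closure (ran A) × closure (ran B)` (`L(A,B)` is singular); (ii) `D(A,B) ⊆ ker B*`;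
(iii) `R(A,B) = {h : A* h ∈ ran B*} ⊆ ker A*`; (iv) `ran A* ∩ ran B* = {0}`;
(v) the adjoint relation `{(k,h) : B* k = A* h}` equals `ker B* × ker A*`. -/
theorem singular_LAB_tfae
    {E H K : Type}
    [NormedAddCommGroup E] [InnerProductSpace ℂ E] [CompleteSpace E]
    [NormedAddCommGroup H] [InnerProductSpace ℂ H] [CompleteSpace H]
    [NormedAddCommGroup K] [InnerProductSpace ℂ K] [CompleteSpace K]
    (A : E →L[ℂ] H) (B : E →L[ℂ] K) :
    List.TFAE
      [closure (Set.range fun f : E => ((A f, B f) : H × K)) =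
        (closure (Set.range ⇑A)) ×ˢ (closure (Set.range ⇑B)),
      {k : K | adjoint B k ∈ Set.range ⇑(adjoint A)} ⊆
        (LinearMap.ker (↑(adjoint B) : K →ₗ[ℂ] E) : Set K),
      {h : H | adjoint A h ∈ Set.range ⇑(adjoint B)} ⊆
        (LinearMap.ker (↑(adjoint A) : H →ₗ[ℂ] E) : Set H),
      Set.range ⇑(adjoint A) ∩ Set.range ⇑(adjoint B) = {0},
      {q : K × H | adjoint B q.1 = adjoint A q.2} =
        (LinearMap.ker (↑(adjoint B) : K →ₗ[ℂ] E) : Set K) ×ˢ (LinearMap.ker (↑(adjoint A) : H →ₗ[ℂ] E) : Set H)] := by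
  tfae_have 1 ↔ 4 := closure_range_prod_eq_iff A B
  tfae_have 2 ↔ 4 := LinearMap.setOf_apply_mem_range_subset_ker_iff
    (adjoint A : H →ₗ[ℂ] E) (adjoint B : K →ₗ[ℂ] E)
  tfae_have 3 ↔ 4 := by
    rw [Set.inter_comm]
    exact LinearMap.setOf_apply_mem_range_subset_ker_iff
      (adjoint B : K →ₗ[ℂ] E) (adjoint A : H →ₗ[ℂ] E)
  tfae_have 5 ↔ 4 := LinearMap.setOf_apply_eq_apply_eq_ker_prod_iff
    (adjoint A : H →ₗ[ℂ] E) (adjoint B : K →ₗ[ℂ] E)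
  tfae_finish
end

section
/- Let C_A and C_B be the operators associated with the pair (A,B). Then the following statements are equivalent: (i) the multivalued part of the closure of L(A,B) is trivial (i.e., L(A,B) is regular); (ii) the subspace {(C_A f, C_B f) : f ∈ E} is (the graph of) an operator; (iii) ker C_A ⊆ ker C_B. -/
open ContinuousLinearMap
open scoped NNReal

/-!
Write `C = (C_A, C_B)`, so that `f ↦ (A f, B f)` is `C ∘ S`. The identity
`‖S f‖² = ‖A f‖² + ‖B f‖²` says that `C` is bounded below on the range of `S`, hence on its
closure `(ker S)ᗮ`; therefore `C` maps `(ker S)ᗮ` onto a closed set, which is the closure of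
`L(A,B)`. The multivalued part of that closure is thus trivial iff `ker C_A ∩ (ker S)ᗮ ⊆ ker C_B`.
Since `C_A` and `C_B` both vanish on `ker S ⊆ ker A ∩ ker B`, this is equivalent to
`ker C_A ⊆ ker C_B`.
-/

section NormedSpace

variable {𝕜 E F G : Type*} [NontriviallyNormedField 𝕜]
  [NormedAddCommGroup E] [NormedSpace 𝕜 E] [CompleteSpace E]
  [NormedAddCommGroup F] [NormedSpace 𝕜 F] [NormedAddCommGroup G] [NormedSpace 𝕜 G]

theorem ContinuousLinearMap.isClosed_image_of_norm_le_mul (C : E →L[𝕜] F) {M : Submodule 𝕜 E}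
    (hM : IsClosed (M : Set E)) (c : ℝ≥0) (hC : ∀ x ∈ M, ‖x‖ ≤ c * ‖C x‖) :
    IsClosed (C '' M) := by
  have : CompleteSpace M := hM.completeSpace_coe
  have hanti : AntilipschitzWith c (C ∘L M.subtypeL) :=
    (C ∘L M.subtypeL).antilipschitz_of_bound fun x => hC x x.2
  have hrange : Set.range (C ∘L M.subtypeL) = C '' M := by
    rw [coe_comp, Set.range_comp, Submodule.coe_subtypeL, Submodule.coe_subtype,
      Subtype.range_coe]
  exact hrange ▸ hanti.isClosed_range (C ∘L M.subtypeL).uniformContinuous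

theorem ContinuousLinearMap.closure_range_comp_eq_image_closure_range (C : E →L[𝕜] F)
    (S : G →L[𝕜] E) (c : ℝ≥0) (hS : ∀ x, ‖S x‖ ≤ c * ‖C (S x)‖) :
    closure (Set.range (C ∘L S)) = C '' closure (Set.range S) := by
  let M := (LinearMap.range (S : G →ₗ[𝕜] E)).topologicalClosure
  have hM : (M : Set E) = closure (Set.range S) := Submodule.topologicalClosure_coe _
  have hbound : ∀ x ∈ M, ‖x‖ ≤ c * ‖C x‖ := by
    intro x hx
    rw [← SetLike.mem_coe, hM] at hx
    refine closure_minimal ?_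
      (isClosed_le continuous_norm (continuous_const.mul C.continuous.norm)) hx
    rintro _ ⟨y, rfl⟩
    exact hS y
  have hclosed : IsClosed (C '' closure (Set.range S)) :=
    hM ▸ C.isClosed_image_of_norm_le_mul (Submodule.isClosed_topologicalClosure _) c hbound
  rw [coe_comp, Set.range_comp]
  exact (closure_minimal (Set.image_mono subset_closure) hclosed).antisymm
    (image_closure_subset_closure_image C.continuous)

end NormedSpace

section Kernel

variable {R M N P : Type*} [Ring R] [AddCommGroup M] [Module R M] [AddCommGroup N] [Module R N]
  [AddCommGroup P] [Module R P]

theorem LinearMap.forall_eq_imp_eq_iff_ker_le_ker (f : M →ₗ[R] N) (g : M →ₗ[R] P) :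
    (∀ x y, f x = f y → g x = g y) ↔ LinearMap.ker f ≤ LinearMap.ker g := by
  refine ⟨fun h x hx => ?_, fun h x y hxy => ?_⟩
  · simpa using h x 0 (by simpa using hx)
  · rw [← sub_eq_zero, ← map_sub]
    exact h (by simp [hxy])

theorem LinearMap.setOf_zero_prod_mem_image_eq_zero_iff (f : M →ₗ[R] N) (g : M →ₗ[R] P)
    (K : Submodule R M) :
    {p : P | ((0 : N), p) ∈ (fun x => (f x, g x)) '' K} = {0} ↔
      LinearMap.ker f ⊓ K ≤ LinearMap.ker g := by
  constructor
  · intro h x ⟨hfx, hxK⟩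
    have : g x ∈ {p : P | ((0 : N), p) ∈ (fun x => (f x, g x)) '' K} :=
      ⟨x, hxK, Prod.ext (LinearMap.mem_ker.mp hfx) rfl⟩
    rwa [h] at this
  · intro h
    ext p
    simp only [Set.mem_ofPred_eq, Set.mem_image, Prod.mk.injEq, Set.mem_singleton_iff]
    constructor
    · rintro ⟨x, hxK, hfx, rfl⟩
      exact h ⟨hfx, hxK⟩
    · rintro rfl
      exact ⟨0, K.zero_mem, map_zero f, map_zero g⟩

end Kernel

theorem Submodule.ker_le_ker_iff_inf_orthogonal_le {𝕜 E F G : Type*} [RCLike 𝕜]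
    [NormedAddCommGroup E] [InnerProductSpace 𝕜 E] [AddCommGroup F] [Module 𝕜 F]
    [AddCommGroup G] [Module 𝕜 G] (f : E →ₗ[𝕜] F) (g : E →ₗ[𝕜] G) {K : Submodule 𝕜 E}
    [K.HasOrthogonalProjection] (hf : K ≤ LinearMap.ker f) (hg : K ≤ LinearMap.ker g) :
    LinearMap.ker f ≤ LinearMap.ker g ↔ LinearMap.ker f ⊓ Kᗮ ≤ LinearMap.ker g := by
  refine ⟨fun h => inf_le_left.trans h, fun h x hx => ?_⟩
  obtain ⟨y, hy, z, hz, rfl⟩ := K.exists_add_mem_mem_orthogonal x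
  have hfz : f z = 0 := by
    rwa [LinearMap.mem_ker, map_add, LinearMap.mem_ker.mp (hf hy), zero_add] at hx
  rw [LinearMap.mem_ker, map_add, LinearMap.mem_ker.mp (hg hy), zero_add]
  exact h ⟨hfz, hz⟩

section InnerProductSpace

variable {𝕜 E H K : Type*} [RCLike 𝕜]
  [NormedAddCommGroup E] [InnerProductSpace 𝕜 E] [CompleteSpace E]
  [NormedAddCommGroup H] [InnerProductSpace 𝕜 H] [CompleteSpace H]
  [NormedAddCommGroup K] [InnerProductSpace 𝕜 K] [CompleteSpace K]

theorem IsSelfAdjoint.norm_sq_apply_eq_of_mul_self_eq {S : E →L[𝕜] E} (hS : IsSelfAdjoint S)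
    {A : E →L[𝕜] H} {B : E →L[𝕜] K} (hSsq : S ∘L S = adjoint A ∘L A + adjoint B ∘L B) (f : E) :
    ‖S f‖ ^ 2 = ‖A f‖ ^ 2 + ‖B f‖ ^ 2 := by
  rw [S.apply_norm_sq_eq_inner_adjoint_left, hS.adjoint_eq, hSsq, add_apply, inner_add_left,
    map_add, A.apply_norm_sq_eq_inner_adjoint_left, B.apply_norm_sq_eq_inner_adjoint_left]

theorem IsSelfAdjoint.norm_apply_le_of_mul_self_eq {S : E →L[𝕜] E} (hS : IsSelfAdjoint S)
    {A : E →L[𝕜] H} {B : E →L[𝕜] K} (hSsq : S ∘L S = adjoint A ∘L A + adjoint B ∘L B) (f : E) :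
    ‖S f‖ ≤ 2 * ‖A.prod B f‖ := by
  have hsq := hS.norm_sq_apply_eq_of_mul_self_eq hSsq f
  rw [prod_apply, Prod.norm_mk]
  have hA := le_max_left ‖A f‖ ‖B f‖
  have hB := le_max_right ‖A f‖ ‖B f‖
  nlinarith [norm_nonneg (S f), norm_nonneg (A f), norm_nonneg (B f)]

end InnerProductSpace

theorem regular_LAB_via_CACB_tfae_general
    {E H K : Type}
    [NormedAddCommGroup E] [InnerProductSpace ℂ E] [CompleteSpace E]
    [NormedAddCommGroup H] [InnerProductSpace ℂ H] [CompleteSpace H]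
    [NormedAddCommGroup K] [InnerProductSpace ℂ K] [CompleteSpace K]
    (A : E →L[ℂ] H) (B : E →L[ℂ] K)
    (S : E →L[ℂ] E) (hSpos : S.IsPositive)
    (hSsq : S ∘L S = adjoint A ∘L A + adjoint B ∘L B)
    (CA : E →L[ℂ] H) (CB : E →L[ℂ] K)
    (hA : A = CA ∘L S) (hB : B = CB ∘L S)
    (hker : ∀ f ∈ LinearMap.ker (A : E →ₗ[ℂ] H) ⊓ LinearMap.ker (B : E →ₗ[ℂ] K), CA f = 0 ∧ CB f = 0) :
    List.TFAE
      [{k : K | ((0 : H), k) ∈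
          closure (Set.range fun f : E => ((A f, B f) : H × K))} = {0},
      ∀ f g : E, CA f = CA g → CB f = CB g,
      LinearMap.ker (CA : E →ₗ[ℂ] H) ≤ LinearMap.ker (CB : E →ₗ[ℂ] K)] := by
  have hS := hSpos.isSelfAdjoint
  have hprod : A.prod B = CA.prod CB ∘L S := by rw [hA, hB]; rfl
  have hclosure : closure (Set.range fun f : E => ((A f, B f) : H × K)) =
      (fun x => (CA x, CB x)) '' (LinearMap.ker (S : E →ₗ[ℂ] E))ᗮ := by
    have hbound (f : E) : ‖S f‖ ≤ 2 * ‖CA.prod CB (S f)‖ := by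
      simpa [hprod] using hS.norm_apply_le_of_mul_self_eq hSsq f
    change closure (Set.range (A.prod B)) = _
    rw [orthogonal_ker, hS.adjoint_eq, Submodule.topologicalClosure_coe, hprod]
    exact (CA.prod CB).closure_range_comp_eq_image_closure_range S 2 hbound
  have hkerS : LinearMap.ker (S : E →ₗ[ℂ] E) ≤
      LinearMap.ker (CA : E →ₗ[ℂ] H) ⊓ LinearMap.ker (CB : E →ₗ[ℂ] K) := fun f hf =>
    have hSf : S f = 0 := hf
    hker f ⟨by simp [hA, hSf], by simp [hB, hSf]⟩
  tfae_have 1 ↔ 3 := by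
    rw [hclosure]
    refine (LinearMap.setOf_zero_prod_mem_image_eq_zero_iff
      (CA : E →ₗ[ℂ] H) (CB : E →ₗ[ℂ] K) _).trans ?_
    exact (Submodule.ker_le_ker_iff_inf_orthogonal_le _ _ (hkerS.trans inf_le_left)
        (hkerS.trans inf_le_right)).symm
  tfae_have 2 ↔ 3 := LinearMap.forall_eq_imp_eq_iff_ker_le_ker (CA : E →ₗ[ℂ] H) (CB : E →ₗ[ℂ] K)
  tfae_finish

/-- Let `S = (A*A + B*B)^{1/2}` be the positive square root and let `C_A`,
`C_B` be the unique contractions with `A = C_A ∘ S`, `B = C_B ∘ S` vanishing on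
`ker A ∩ ker B`. The following are equivalent: (i) the multivalued part of the closure of
`L(A,B)` is trivial (`L(A,B)` is regular); (ii) `{(C_A f, C_B f) : f ∈ E}` is (the graph of)
an operator; (iii) `ker C_A ⊆ ker C_B`. -/
theorem regular_LAB_via_CACB_tfae
    {E H K : Type}
    [NormedAddCommGroup E] [InnerProductSpace ℂ E] [CompleteSpace E]
    [NormedAddCommGroup H] [InnerProductSpace ℂ H] [CompleteSpace H]
    [NormedAddCommGroup K] [InnerProductSpace ℂ K] [CompleteSpace K]
    (A : E →L[ℂ] H) (B : E →L[ℂ] K)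
    (S : E →L[ℂ] E) (hSpos : S.IsPositive)
    (hSsq : S ∘L S = adjoint A ∘L A + adjoint B ∘L B)
    (CA : E →L[ℂ] H) (CB : E →L[ℂ] K)
    (hCAnorm : ‖CA‖ ≤ 1) (hCBnorm : ‖CB‖ ≤ 1)
    (hA : A = CA ∘L S) (hB : B = CB ∘L S)
    (hker : ∀ f ∈ LinearMap.ker (A : E →ₗ[ℂ] H) ⊓ LinearMap.ker (B : E →ₗ[ℂ] K), CA f = 0 ∧ CB f = 0) :
    List.TFAE
      [{k : K | ((0 : H), k) ∈
          closure (Set.range fun f : E => ((A f, B f) : H × K))} = {0},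
      ∀ f g : E, CA f = CA g → CB f = CB g,
      LinearMap.ker (CA : E →ₗ[ℂ] H) ≤ LinearMap.ker (CB : E →ₗ[ℂ] K)] :=
  regular_LAB_via_CACB_tfae_general A B S hSpos hSsq CA CB hA hB hker
end

section
/- Let C_A and C_B be the operators associated with the pair (A,B). Then the closure of L(A,B) in H × K equals closure(ran A) × closure(ran B) (i.e., L(A,B) is singular) if and only if ker C_A + ker C_B = E. -/
/-!
Write `T = (C_A, C_B) : E → H × K`, so that `(A, B) = T ∘ S`. Since `S` is self-adjoint,
`(ran S)ᗮ = ker S ⊆ ker A ∩ ker B`, on which `C_A` and `C_B` vanish; hence `T`, `C_A`, `C_B` have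
the same ranges on `closure (ran S)` as on `E`, and `ran A`, `ran C_A` (resp. `ran B`, `ran C_B`)
have the same closure. On `closure (ran S)` the identity `‖S f‖² = ‖A f‖² + ‖B f‖²` becomes
`‖g‖² = ‖C_A g‖² + ‖C_B g‖²`, so `T` is bounded below there and `ran T` is closed. Thus the closure
of `L(A,B)` is `ran T`, and the closed `ran T` equals `closure (ran C_A) × closure (ran C_B)`
exactly when `ker C_A + ker C_B = E`: for `⇒` write `(C_A x, 0) = T z`, so `x = (x - z) + z`.
-/

open ContinuousLinearMap Set

section LinearAlgebra

variable {R E H K : Type*} [Ring R]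
  [TopologicalSpace E] [AddCommGroup E] [Module R E]
  [TopologicalSpace H] [AddCommGroup H] [Module R H]
  [TopologicalSpace K] [AddCommGroup K] [Module R K]

theorem range_prod_eq_closure_prod_closure_iff {f : E →L[R] H} {g : E →L[R] K}
    (hclosed : IsClosed (range (f.prod g))) :
    range (f.prod g) = closure (range f) ×ˢ closure (range g) ↔
      f.ker ⊔ g.ker = ⊤ := by
  constructor
  · intro hrange
    refine eq_top_iff.mpr fun x _ => ?_
    have hmem : (f x, (0 : K)) ∈ range (f.prod g) :=
      hrange ▸ ⟨subset_closure ⟨x, rfl⟩, subset_closure ⟨0, map_zero g⟩⟩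
    obtain ⟨z, hz⟩ := hmem
    rw [prod_apply, Prod.mk.injEq] at hz
    have hfx : x - z ∈ f.ker := by simp [hz.1]
    have hgz : z ∈ g.ker := hz.2
    simpa using Submodule.add_mem_sup hfx hgz
  · intro hker
    have hrange : range (f.prod g) = range f ×ˢ range g :=
      congrArg SetLike.coe (LinearMap.range_prod_eq hker)
    rw [← closure_prod_eq, ← hrange, hclosed.closure_eq]

end LinearAlgebra

section NormedSpace

variable {𝕜 E F G : Type*} [NormedField 𝕜]
  [NormedAddCommGroup E] [NormedSpace 𝕜 E]
  [NormedAddCommGroup F] [NormedSpace 𝕜 F]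
  [NormedAddCommGroup G] [NormedSpace 𝕜 G]

theorem isClosed_image_closure_range_of_norm_le [CompleteSpace E] {S : G →L[𝕜] E}
    {T : E →L[𝕜] F} (C : NNReal)
    (h : ∀ x, ‖S x‖ ≤ C * ‖T (S x)‖) : IsClosed (T '' closure (range S)) := by
  set M := S.range.topologicalClosure
  have : CompleteSpace M := S.range.isClosed_topologicalClosure.completeSpace_coe
  have hM : ∀ y ∈ closure (range S), ‖y‖ ≤ C * ‖T y‖ :=
    closure_minimal (by rintro _ ⟨x, rfl⟩; exact h x)
      (isClosed_le continuous_norm (continuous_const.mul (continuous_norm.comp T.continuous)))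
  have hanti : AntilipschitzWith C (T ∘L M.subtypeL) :=
    antilipschitz_of_bound _ fun y => hM y y.2
  have := hanti.isClosed_range (T ∘L M.subtypeL).uniformContinuous
  rwa [coe_comp, range_comp, Submodule.coe_subtypeL, Submodule.coe_subtype,
    Subtype.range_coe] at this

theorem ker_le_ker_inf_ker_of_norm_sq_eq {S : E →L[𝕜] E} {A : E →L[𝕜] F} {B : E →L[𝕜] G}
    (h : ∀ x, ‖S x‖ ^ 2 = ‖A x‖ ^ 2 + ‖B x‖ ^ 2) : S.ker ≤ A.ker ⊓ B.ker := by
  intro x hx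
  have h0 : ‖A x‖ ^ 2 + ‖B x‖ ^ 2 = 0 := by
    rw [← h, show S x = 0 from hx, norm_zero, sq, zero_mul]
  obtain ⟨hA, hB⟩ := (add_eq_zero_iff_of_nonneg (sq_nonneg _) (sq_nonneg _)).mp h0
  exact ⟨by simpa using hA, by simpa using hB⟩

theorem norm_le_two_mul_norm_prod {x : E} {a : F} {b : G} (h : ‖x‖ ^ 2 = ‖a‖ ^ 2 + ‖b‖ ^ 2) :
    ‖x‖ ≤ 2 * ‖(a, b)‖ := by
  have ha : ‖a‖ ≤ ‖(a, b)‖ := norm_fst_le (a, b)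
  have hb : ‖b‖ ≤ ‖(a, b)‖ := norm_snd_le (a, b)
  nlinarith [norm_nonneg x, norm_nonneg a, norm_nonneg b]

end NormedSpace

section InnerProductSpace

variable {𝕜 E F G : Type*} [RCLike 𝕜]
  [NormedAddCommGroup E] [InnerProductSpace 𝕜 E] [CompleteSpace E]
  [NormedAddCommGroup F] [InnerProductSpace 𝕜 F]
  [NormedAddCommGroup G] [InnerProductSpace 𝕜 G] [CompleteSpace G]

theorem image_closure_range_eq_range {V : Type*} [TopologicalSpace V] [AddCommGroup V]
    [Module 𝕜 V] {S : G →L[𝕜] E} {T : E →L[𝕜] V} (h : (adjoint S).ker ≤ T.ker) :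
    T '' closure (range S) = range T := by
  refine (image_subset_range _ _).antisymm ?_
  rintro _ ⟨x, rfl⟩
  set M := S.range.topologicalClosure
  obtain ⟨y, hy, z, hz, rfl⟩ := M.exists_add_mem_mem_orthogonal x
  rw [Submodule.orthogonal_closure, orthogonal_range] at hz
  refine ⟨y, hy, ?_⟩
  simp [show T z = 0 from h hz]

theorem closure_range_comp_eq_closure_range {V : Type*} [TopologicalSpace V] [AddCommGroup V]
    [Module 𝕜 V] {S : G →L[𝕜] E} {T : E →L[𝕜] V} (h : (adjoint S).ker ≤ T.ker) :
    closure (range (T ∘L S)) = closure (range T) := by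
  refine (closure_mono (range_comp_subset_range S T)).antisymm
    (closure_minimal ?_ isClosed_closure)
  rw [← image_closure_range_eq_range h, range_comp]
  exact image_closure_subset_closure_image T.continuous

theorem norm_sq_apply_eq_add_of_comp_self_eq [CompleteSpace F] {S : E →L[𝕜] E}
    (hS : IsSelfAdjoint S) {A : E →L[𝕜] F} {B : E →L[𝕜] G}
    (h : S ∘L S = adjoint A ∘L A + adjoint B ∘L B) (x : E) :
    ‖S x‖ ^ 2 = ‖A x‖ ^ 2 + ‖B x‖ ^ 2 := by
  rw [apply_norm_sq_eq_inner_adjoint_left, apply_norm_sq_eq_inner_adjoint_left,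
    apply_norm_sq_eq_inner_adjoint_left, hS.adjoint_eq, h, add_apply, inner_add_left, map_add]

end InnerProductSpace

theorem singular_LAB_iff_ker_sum_general
    {E H K : Type}
    [NormedAddCommGroup E] [InnerProductSpace ℂ E] [CompleteSpace E]
    [NormedAddCommGroup H] [InnerProductSpace ℂ H] [CompleteSpace H]
    [NormedAddCommGroup K] [InnerProductSpace ℂ K] [CompleteSpace K]
    (A : E →L[ℂ] H) (B : E →L[ℂ] K)
    (S : E →L[ℂ] E) (hSpos : S.IsPositive)
    (hSsq : S ∘L S = adjoint A ∘L A + adjoint B ∘L B)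
    (CA : E →L[ℂ] H) (CB : E →L[ℂ] K)
    (hA : A = CA ∘L S) (hB : B = CB ∘L S)
    (hker : ∀ f ∈ LinearMap.ker (A : E →ₗ[ℂ] H) ⊓ LinearMap.ker (B : E →ₗ[ℂ] K), CA f = 0 ∧ CB f = 0) :
    closure (Set.range fun f : E => ((A f, B f) : H × K)) =
        (closure (Set.range ⇑A)) ×ˢ (closure (Set.range ⇑B)) ↔
      LinearMap.ker (CA : E →ₗ[ℂ] H) ⊔ LinearMap.ker (CB : E →ₗ[ℂ] K) = ⊤ := by
  subst hA hB
  have hS := hSpos.isSelfAdjoint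
  have hnorm := norm_sq_apply_eq_add_of_comp_self_eq hS hSsq
  have hkerS : (adjoint S).ker ≤ CA.ker ⊓ CB.ker := by
    rw [hS.adjoint_eq]
    exact fun x hx => hker x (ker_le_ker_inf_ker_of_norm_sq_eq hnorm hx)
  have hkerT : (adjoint S).ker ≤ (CA.prod CB).ker := by rwa [ker_prod]
  have hclosed : IsClosed (range (CA.prod CB)) := by
    rw [← image_closure_range_eq_range hkerT]
    exact isClosed_image_closure_range_of_norm_le 2 fun x => norm_le_two_mul_norm_prod (hnorm x)
  rw [show (range fun f => ((CA ∘L S) f, (CB ∘L S) f)) = range (CA.prod CB ∘L S) from rfl,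
    closure_range_comp_eq_closure_range hkerT, hclosed.closure_eq,
    closure_range_comp_eq_closure_range (hkerS.trans inf_le_left),
    closure_range_comp_eq_closure_range (hkerS.trans inf_le_right)]
  exact range_prod_eq_closure_prod_closure_iff hclosed

/-- Let `S = (A*A + B*B)^{1/2}` be the positive square root and let `C_A`,
`C_B` be the unique contractions with `A = C_A ∘ S`, `B = C_B ∘ S` vanishing on
`ker A ∩ ker B`. Then the closure of `L(A,B)` equals `closure (ran A) × closure (ran B)`
(`L(A,B)` is singular) if and only if `ker C_A + ker C_B = E`. -/
theorem singular_LAB_iff_ker_sum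
    {E H K : Type}
    [NormedAddCommGroup E] [InnerProductSpace ℂ E] [CompleteSpace E]
    [NormedAddCommGroup H] [InnerProductSpace ℂ H] [CompleteSpace H]
    [NormedAddCommGroup K] [InnerProductSpace ℂ K] [CompleteSpace K]
    (A : E →L[ℂ] H) (B : E →L[ℂ] K)
    (S : E →L[ℂ] E) (hSpos : S.IsPositive)
    (hSsq : S ∘L S = adjoint A ∘L A + adjoint B ∘L B)
    (CA : E →L[ℂ] H) (CB : E →L[ℂ] K)
    (hCAnorm : ‖CA‖ ≤ 1) (hCBnorm : ‖CB‖ ≤ 1)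
    (hA : A = CA ∘L S) (hB : B = CB ∘L S)
    (hker : ∀ f ∈ LinearMap.ker (A : E →ₗ[ℂ] H) ⊓ LinearMap.ker (B : E →ₗ[ℂ] K), CA f = 0 ∧ CB f = 0) :
    closure (Set.range fun f : E => ((A f, B f) : H × K)) =
        (closure (Set.range ⇑A)) ×ˢ (closure (Set.range ⇑B)) ↔
      LinearMap.ker (CA : E →ₗ[ℂ] H) ⊔ LinearMap.ker (CB : E →ₗ[ℂ] K) = ⊤ :=
  singular_LAB_iff_ker_sum_general A B S hSpos hSsq CA CB hA hB hker
end

section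
/- The following statements are equivalent: (i) B is singular with respect to A; (ii) ran A* ∩ ran B* = {0}; (iii) the closure of L(A,B) in H × K equals closure(ran A) × closure(ran B) (i.e., L(A,B) is singular). -/
/-! If `w = A* u = B* v`, the rank-one operator `f ↦ ⟪w, f⟫ w` is dominated by both `A` and `B`,
since `⟪w, f⟫ = ⟪u, A f⟫ = ⟪v, B f⟫`; this gives (i) → (ii).

For (ii) → (iii), pass to the Hilbert space `H ⊕₂ K`. A vector `(x, y)` is orthogonal to `L(A,B)`
iff `A* x + B* y = 0`, and orthogonal to `ran A × ran B` iff `A* x = 0 = B* y`. By (ii) these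
conditions agree, so the two subspaces have the same orthogonal complement, hence the same closure.

For (iii) → (i), if `D ≺ A` and `D ≺ B` then `‖D f‖ ≤ c ‖A f - A g‖ + c' ‖B g‖` for every `g`, and
by (iii) the pair `(A g, B g)` can be taken arbitrarily close to `(A f, 0)`. -/

open ContinuousLinearMap

/-- `B` is singular with respect to `A`: every bounded operator `D : E → E` that is dominated
both by `A` and by `B` (i.e. `‖D f‖ ≤ c ‖A f‖` and `‖D f‖ ≤ c' ‖B f‖` for some `c, c' > 0`)
is zero. -/
def SingularWith
    {E H K : Type}
    [NormedAddCommGroup E] [InnerProductSpace ℂ E] [CompleteSpace E]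
    [NormedAddCommGroup H] [InnerProductSpace ℂ H] [CompleteSpace H]
    [NormedAddCommGroup K] [InnerProductSpace ℂ K] [CompleteSpace K]
    (A : E →L[ℂ] H) (B : E →L[ℂ] K) : Prop :=
  ∀ D : E →L[ℂ] E,
    (∃ c : ℝ, 0 < c ∧ ∀ f : E, ‖D f‖ ≤ c * ‖A f‖) →
    (∃ c : ℝ, 0 < c ∧ ∀ f : E, ‖D f‖ ≤ c * ‖B f‖) → D = 0

/-- `D ≺ T` in the paper's notation; `SingularWith A B` unfolds to
`∀ D, IsDominatedBy D A → IsDominatedBy D B → D = 0`. -/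
def IsDominatedBy {𝕜 E F G : Type*} [NontriviallyNormedField 𝕜]
    [NormedAddCommGroup E] [NormedSpace 𝕜 E] [NormedAddCommGroup F] [NormedSpace 𝕜 F]
    [NormedAddCommGroup G] [NormedSpace 𝕜 G] (D : E →L[𝕜] G) (T : E →L[𝕜] F) : Prop :=
  ∃ c : ℝ, 0 < c ∧ ∀ f : E, ‖D f‖ ≤ c * ‖T f‖

theorem IsDominatedBy.apply_eq_zero_of_mem_closure {𝕜 E F G H : Type*}
    [NontriviallyNormedField 𝕜] [NormedAddCommGroup E] [NormedSpace 𝕜 E]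
    [NormedAddCommGroup F] [NormedSpace 𝕜 F] [NormedAddCommGroup G] [NormedSpace 𝕜 G]
    [NormedAddCommGroup H] [NormedSpace 𝕜 H] {D : E →L[𝕜] G} {A : E →L[𝕜] F}
    {B : E →L[𝕜] H} (hA : IsDominatedBy D A) (hB : IsDominatedBy D B) {f : E}
    (hf : ((A f, 0) : F × H) ∈ closure (Set.range fun g : E => ((A g, B g) : F × H))) :
    D f = 0 := by
  obtain ⟨c, -, hc⟩ := hA
  obtain ⟨c', -, hc'⟩ := hB
  let bound : F × H → ℝ := fun p => c * ‖A f - p.1‖ + c' * ‖p.2‖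
  have hclosed : IsClosed {p | ‖D f‖ ≤ bound p} :=
    isClosed_le continuous_const (by fun_prop)
  have hrange : Set.range (fun g : E => ((A g, B g) : F × H)) ⊆ {p | ‖D f‖ ≤ bound p} := by
    rintro _ ⟨g, rfl⟩
    calc ‖D f‖ ≤ ‖D (f - g)‖ + ‖D g‖ := by simpa using norm_add_le (D (f - g)) (D g)
      _ ≤ bound (A g, B g) := by simpa [bound] using add_le_add (hc (f - g)) (hc' g)
  simpa [bound] using closure_minimal hrange hclosed hf

section Hilbert

variable {𝕜 E H K : Type*} [RCLike 𝕜]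
    [NormedAddCommGroup E] [InnerProductSpace 𝕜 E] [CompleteSpace E]
    [NormedAddCommGroup H] [InnerProductSpace 𝕜 H] [CompleteSpace H]
    [NormedAddCommGroup K] [InnerProductSpace 𝕜 K] [CompleteSpace K]

theorem isDominatedBy_rankOne_of_mem_range_adjoint {T : E →L[𝕜] H} {w : E}
    (hw : w ∈ Set.range (adjoint T)) : IsDominatedBy ((innerSL 𝕜 w).smulRight w) T := by
  obtain ⟨z, rfl⟩ := hw
  refine ⟨‖z‖ * ‖adjoint T z‖ + 1, by positivity, fun f => ?_⟩
  calc ‖inner 𝕜 (adjoint T z) f • adjoint T z‖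
      = ‖inner 𝕜 z (T f)‖ * ‖adjoint T z‖ := by rw [norm_smul, adjoint_inner_left]
    _ ≤ ‖z‖ * ‖T f‖ * ‖adjoint T z‖ := by gcongr; exact norm_inner_le_norm z (T f)
    _ ≤ (‖z‖ * ‖adjoint T z‖ + 1) * ‖T f‖ := by nlinarith [norm_nonneg (T f)]

theorem adjoint_eq_zero_of_add_eq_zero {A : E →L[𝕜] H} {B : E →L[𝕜] K}
    (h : Set.range (adjoint A) ∩ Set.range (adjoint B) = {0}) {x : H} {y : K}
    (hxy : adjoint A x + adjoint B y = 0) : adjoint A x = 0 ∧ adjoint B y = 0 := by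
  have hx : adjoint A x = 0 := by
    have : adjoint A x ∈ Set.range (adjoint A) ∩ Set.range (adjoint B) :=
      ⟨⟨x, rfl⟩, ⟨-y, by rw [map_neg, eq_neg_of_add_eq_zero_left hxy]⟩⟩
    rwa [h] at this
  exact ⟨hx, by rwa [hx, zero_add] at hxy⟩

/-- `L(A,B)`, transported to `WithLp 2 (H × K)` so that orthogonal complements make sense. -/
def rangePairL2 (A : E →L[𝕜] H) (B : E →L[𝕜] K) : Submodule 𝕜 (WithLp 2 (H × K)) :=
  (A.prod B).range.comap (WithLp.linearEquiv 2 𝕜 (H × K)).toLinearMap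

def rangeProdL2 (A : E →L[𝕜] H) (B : E →L[𝕜] K) : Submodule 𝕜 (WithLp 2 (H × K)) :=
  (A.range.prod B.range).comap (WithLp.linearEquiv 2 𝕜 (H × K)).toLinearMap

theorem mem_orthogonal_rangePairL2_iff (A : E →L[𝕜] H) (B : E →L[𝕜] K)
    (x : WithLp 2 (H × K)) :
    x ∈ (rangePairL2 A B)ᗮ ↔ adjoint A x.ofLp.1 + adjoint B x.ofLp.2 = 0 := by
  have inner_toLp_pair (f : E) :
      inner 𝕜 (WithLp.toLp 2 (A f, B f)) x =
        inner 𝕜 f (adjoint A x.ofLp.1 + adjoint B x.ofLp.2) := by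
    simp [inner_add_right, adjoint_inner_right]
  constructor
  · intro hx
    refine ext_inner_left 𝕜 fun f => ?_
    rw [inner_zero_right, ← inner_toLp_pair]
    exact hx _ ⟨f, rfl⟩
  · rintro h u ⟨f, hf⟩
    obtain rfl : u = WithLp.toLp 2 (A f, B f) := congrArg (WithLp.toLp 2) hf.symm
    rw [inner_toLp_pair, h, inner_zero_right]

theorem mem_orthogonal_rangeProdL2_iff (A : E →L[𝕜] H) (B : E →L[𝕜] K)
    (x : WithLp 2 (H × K)) :
    x ∈ (rangeProdL2 A B)ᗮ ↔ adjoint A x.ofLp.1 = 0 ∧ adjoint B x.ofLp.2 = 0 := by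
  have inner_toLp_prod (f g : E) : inner 𝕜 (WithLp.toLp 2 (A f, B g)) x =
      inner 𝕜 f (adjoint A x.ofLp.1) + inner 𝕜 g (adjoint B x.ofLp.2) := by
    simp [adjoint_inner_right]
  constructor
  · intro hx
    refine ⟨ext_inner_left 𝕜 fun f => ?_, ext_inner_left 𝕜 fun g => ?_⟩
    · simpa [adjoint_inner_right] using hx (WithLp.toLp 2 (A f, B 0)) ⟨⟨f, rfl⟩, ⟨0, rfl⟩⟩
    · simpa [adjoint_inner_right] using hx (WithLp.toLp 2 (A 0, B g)) ⟨⟨0, rfl⟩, ⟨g, rfl⟩⟩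
  · rintro ⟨hA, hB⟩ u ⟨⟨f, hf⟩, ⟨g, hg⟩⟩
    obtain rfl : u = WithLp.toLp 2 (A f, B g) :=
      congrArg (WithLp.toLp 2) (Prod.ext hf.symm hg.symm)
    rw [inner_toLp_prod, hA, hB, inner_zero_right, inner_zero_right, add_zero]

theorem closure_range_pair_eq_prod {A : E →L[𝕜] H} {B : E →L[𝕜] K}
    (h : Set.range (adjoint A) ∩ Set.range (adjoint B) = {0}) :
    closure (Set.range fun f : E => ((A f, B f) : H × K)) =
      closure (Set.range A) ×ˢ closure (Set.range B) := by
  have horth : (rangePairL2 A B)ᗮ = (rangeProdL2 A B)ᗮ := by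
    ext x
    rw [mem_orthogonal_rangePairL2_iff, mem_orthogonal_rangeProdL2_iff]
    exact ⟨adjoint_eq_zero_of_add_eq_zero h, fun ⟨hx, hy⟩ => by rw [hx, hy, add_zero]⟩
  let e := (WithLp.prodContinuousLinearEquiv 2 𝕜 H K).toHomeomorph
  rw [← closure_prod_eq]
  refine Set.preimage_injective.mpr e.surjective ?_
  rw [e.preimage_closure, e.preimage_closure]
  change closure (rangePairL2 A B : Set (WithLp 2 (H × K))) =
    closure (rangeProdL2 A B : Set (WithLp 2 (H × K)))
  rw [← Submodule.topologicalClosure_coe, ← Submodule.topologicalClosure_coe,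
    ← Submodule.orthogonal_orthogonal_eq_closure, ← Submodule.orthogonal_orthogonal_eq_closure,
    horth]

end Hilbert

/-- The following are equivalent: (i) `B` is singular with respect to `A`;
(ii) `ran A* ∩ ran B* = {0}`; (iii) the closure of `L(A,B)` equals
`closure (ran A) × closure (ran B)` (`L(A,B)` is singular). -/
theorem singular_pair_tfae
    {E H K : Type}
    [NormedAddCommGroup E] [InnerProductSpace ℂ E] [CompleteSpace E]
    [NormedAddCommGroup H] [InnerProductSpace ℂ H] [CompleteSpace H]
    [NormedAddCommGroup K] [InnerProductSpace ℂ K] [CompleteSpace K]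
    (A : E →L[ℂ] H) (B : E →L[ℂ] K) :
    List.TFAE
      [SingularWith A B,
      Set.range ⇑(adjoint A) ∩ Set.range ⇑(adjoint B) = {0},
      closure (Set.range fun f : E => ((A f, B f) : H × K)) =
        (closure (Set.range ⇑A)) ×ˢ (closure (Set.range ⇑B))] := by
  tfae_have 1 → 2 := by
    intro hsing
    refine Set.eq_singleton_iff_unique_mem.mpr
      ⟨⟨⟨0, map_zero _⟩, ⟨0, map_zero _⟩⟩, fun w ⟨hwA, hwB⟩ => ?_⟩
    have hD := hsing _ (isDominatedBy_rankOne_of_mem_range_adjoint hwA)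
      (isDominatedBy_rankOne_of_mem_range_adjoint hwB)
    simpa using DFunLike.congr_fun hD w
  tfae_have 2 → 3 := closure_range_pair_eq_prod
  tfae_have 3 → 1 := fun h D hA hB => ext fun f =>
    IsDominatedBy.apply_eq_zero_of_mem_closure hA hB <| by
      rw [h]
      exact ⟨subset_closure ⟨f, rfl⟩, subset_closure ⟨0, map_zero B⟩⟩
  tfae_finish
end

section
/- Let P be the orthogonal projection of K onto the orthogonal complement D(A,B)⊥, and set B_reg = (I − P) ∘ B and B_sing = P ∘ B. Then B = B_reg + B_sing, B_reg is almost dominated by A, and B_sing is singular with respect to A. -/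
open ContinuousLinearMap

/-- A witness for almost domination of `B : E → K` by `A : E → H`: a sequence of complex
Hilbert spaces `Kn n`, bounded operators `Bn n : E → Kn n` and constants `c n ≥ 0` such that
for all `f : E` one has `‖Bn n f‖ ≤ c n * ‖A f‖`, `‖Bn n f‖ ≤ ‖Bn (n+1) f‖` and `‖Bn n f‖`
converges (increasingly) to `‖B f‖`. -/
structure AlmostDominatedWitness
    {E H K : Type}
    [NormedAddCommGroup E] [InnerProductSpace ℂ E] [CompleteSpace E]
    [NormedAddCommGroup H] [InnerProductSpace ℂ H] [CompleteSpace H]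
    [NormedAddCommGroup K] [InnerProductSpace ℂ K] [CompleteSpace K]
    (A : E →L[ℂ] H) (B : E →L[ℂ] K) where
  Kn : ℕ → Type
  [nacg : ∀ n, NormedAddCommGroup (Kn n)]
  [ips : ∀ n, InnerProductSpace ℂ (Kn n)]
  [cs : ∀ n, CompleteSpace (Kn n)]
  Bn : ∀ n, E →L[ℂ] Kn n
  c : ℕ → ℝ
  c_nonneg : ∀ n, 0 ≤ c n
  bound : ∀ (n : ℕ) (f : E), ‖Bn n f‖ ≤ c n * ‖A f‖
  mono : ∀ (n : ℕ) (f : E), ‖Bn n f‖ ≤ ‖Bn (n + 1) f‖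
  tendsto : ∀ f : E, Filter.Tendsto (fun n => ‖Bn n f‖) Filter.atTop (nhds ‖B f‖)

/-- `B` is almost dominated by `A`. -/
def AlmostDominated
    {E H K : Type}
    [NormedAddCommGroup E] [InnerProductSpace ℂ E] [CompleteSpace E]
    [NormedAddCommGroup H] [InnerProductSpace ℂ H] [CompleteSpace H]
    [NormedAddCommGroup K] [InnerProductSpace ℂ K] [CompleteSpace K]
    (A : E →L[ℂ] H) (B : E →L[ℂ] K) : Prop :=
  Nonempty (AlmostDominatedWitness A B)

/-- The subspace `D(A,B) = {k ∈ K : B* k ∈ ran A*}`. -/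
noncomputable def DAB
    {E H K : Type}
    [NormedAddCommGroup E] [InnerProductSpace ℂ E] [CompleteSpace E]
    [NormedAddCommGroup H] [InnerProductSpace ℂ H] [CompleteSpace H]
    [NormedAddCommGroup K] [InnerProductSpace ℂ K] [CompleteSpace K]
    (A : E →L[ℂ] H) (B : E →L[ℂ] K) : Submodule ℂ K :=
  Submodule.comap (adjoint B : K →ₗ[ℂ] E) (LinearMap.range (adjoint A : H →ₗ[ℂ] E))

/-!
The hypothesis on `P` forces `P` to be the orthogonal projection onto `D(A,B)ᗮ`.

Singular part: if `D ≺ A` and `D ≺ P B`, Douglas' range inclusion puts every `D* g` in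
`ran A* ∩ ran (B* P)`, so `D* g = B* (P k)` with `P k ∈ D(A,B) ∩ D(A,B)ᗮ = 0`; hence `D* = 0`.

Regular part: `C = (I - P) B` has range in `closure D(A,B) ⊆ closure D(A,C)`. Let `B_n f` be the
component of `(C f, 0)` orthogonal to the graph `{(C g, n A g)}` in `K ⊕ H`, so that
`‖B_n f‖² = inf_g (‖C f - C g‖² + n² ‖A g‖²)`: this increases with `n` and is at most `n ‖A f‖`
(take `g = f`) and `‖C f‖` (take `g = 0`). If `C* k = A* h`, then `(k, -h/n)` is orthogonal to
the graph, whence `|⟪k, C f⟫| ≤ (‖k‖ + ‖h‖/n) ‖B_n f‖`. Letting `n → ∞` and then `k → C f`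
within `D(A,C)` gives `‖C f‖ ≤ sup_n ‖B_n f‖`.
-/

open scoped InnerProductSpace
open Filter Topology

section RangeInclusion

variable {𝕜 E F G : Type*} [RCLike 𝕜]
    [NormedAddCommGroup E] [InnerProductSpace 𝕜 E] [CompleteSpace E]
    [NormedAddCommGroup F] [InnerProductSpace 𝕜 F] [CompleteSpace F]
    [NormedAddCommGroup G] [InnerProductSpace 𝕜 G] [CompleteSpace G]

theorem range_adjoint_le_of_norm_le {T : E →L[𝕜] F} {D : E →L[𝕜] G} {c : ℝ}
    (hDT : ∀ f, ‖D f‖ ≤ c * ‖T f‖) :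
    LinearMap.range (adjoint D : G →ₗ[𝕜] E) ≤ LinearMap.range (adjoint T : F →ₗ[𝕜] E) := by
  rintro _ ⟨g, rfl⟩
  let φ : E →ₗ[𝕜] 𝕜 := (innerSL 𝕜 g ∘L D : E →L[𝕜] 𝕜)
  have hker : LinearMap.ker (T : E →ₗ[𝕜] F) ≤ LinearMap.ker φ := fun f hf => by
    have : ‖D f‖ ≤ 0 := by simpa [show T f = 0 from hf] using hDT f
    simp [φ, norm_le_zero_iff.mp this]
  -- `⟪g, D f⟫` only depends on `T f`, so it is a functional on `range T`
  let ψ : LinearMap.range (T : E →ₗ[𝕜] F) →ₗ[𝕜] 𝕜 :=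
    (LinearMap.ker (T : E →ₗ[𝕜] F)).liftQ φ hker ∘ₗ (T : E →ₗ[𝕜] F).quotKerEquivRange.symm
  have hψ : ∀ f, ψ ⟨(T : E →ₗ[𝕜] F) f, LinearMap.mem_range_self _ f⟩ = ⟪g, D f⟫_𝕜 :=
    fun f => by
      rw [LinearMap.comp_apply, LinearEquiv.coe_coe,
        LinearMap.quotKerEquivRange_symm_apply_image, Submodule.mkQ_apply,
        Submodule.liftQ_apply]
      rfl
  have hψ_bound : ∀ y, ‖ψ y‖ ≤ c * ‖g‖ * ‖y‖ := by
    rintro ⟨_, f, rfl⟩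
    rw [hψ]
    calc ‖⟪g, D f⟫_𝕜‖ ≤ ‖g‖ * ‖D f‖ := norm_inner_le_norm _ _
      _ ≤ ‖g‖ * (c * ‖T f‖) := by gcongr; exact hDT f
      _ = c * ‖g‖ * ‖T f‖ := by ring
  obtain ⟨Ψ, hΨ, -⟩ := exists_extension_norm_eq _ (ψ.mkContinuous _ hψ_bound)
  refine ⟨(InnerProductSpace.toDual 𝕜 F).symm Ψ, ext_inner_right 𝕜 fun f => ?_⟩
  simp only [ContinuousLinearMap.coe_coe]
  rw [adjoint_inner_left, adjoint_inner_left, InnerProductSpace.toDual_symm_apply, ← hψ]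
  exact hΨ ⟨_, LinearMap.mem_range_self (T : E →ₗ[𝕜] F) f⟩

end RangeInclusion

theorem Submodule.norm_starProjection_orthogonal_eq_infDist {𝕜 F : Type*} [RCLike 𝕜]
    [NormedAddCommGroup F] [InnerProductSpace 𝕜 F] [CompleteSpace F]
    (U : Submodule 𝕜 F) (x : F) :
    ‖Uᗮ.starProjection x‖ = Metric.infDist x U := by
  rw [← Metric.infDist_closure, ← Submodule.topologicalClosure_coe,
    ← Submodule.orthogonal_orthogonal_eq_closure, Metric.infDist_eq_iInf,
    ← sub_sub_cancel x (Uᗮ.starProjection x), ← starProjection_orthogonal_val,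
    starProjection_minimal]
  simp [dist_eq_norm]

section Approximation

variable {E H K : Type}
    [NormedAddCommGroup E] [InnerProductSpace ℂ E]
    [NormedAddCommGroup H] [InnerProductSpace ℂ H]
    [NormedAddCommGroup K] [InnerProductSpace ℂ K]
    (A : E →L[ℂ] H) (C : E →L[ℂ] K)

noncomputable def graphMap (n : ℕ) : E →L[ℂ] WithLp 2 (K × H) :=
  (WithLp.prodContinuousLinearEquiv 2 ℂ K H).symm.toContinuousLinearMap ∘L C.prod ((n : ℂ) • A)

theorem norm_graphMap_zero_sub_sq (n : ℕ) (f g : E) :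
    ‖graphMap A C 0 f - graphMap A C n g‖ ^ 2 = ‖C f - C g‖ ^ 2 + (n * ‖A g‖) ^ 2 := by
  rw [WithLp.prod_norm_sq_eq_of_L2]
  simp [graphMap, norm_smul]

theorem monotone_norm_graphMap_zero_sub (f g : E) :
    Monotone fun n => ‖graphMap A C 0 f - graphMap A C n g‖ := fun m n hmn => by
  rw [← sq_le_sq₀ (norm_nonneg _) (norm_nonneg _), norm_graphMap_zero_sub_sq,
    norm_graphMap_zero_sub_sq]
  gcongr

variable [CompleteSpace H] [CompleteSpace K]

set_option synthInstance.maxHeartbeats 40000 in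
noncomputable def dominatedApprox (n : ℕ) : E →L[ℂ] WithLp 2 (K × H) :=
  (LinearMap.range (graphMap A C n : E →ₗ[ℂ] WithLp 2 (K × H))).orthogonal.starProjection ∘L
    graphMap A C 0

theorem norm_dominatedApprox_eq_infDist (n : ℕ) (f : E) :
    ‖dominatedApprox A C n f‖ = Metric.infDist (graphMap A C 0 f) (Set.range (graphMap A C n)) := by
  rw [dominatedApprox, comp_apply, Submodule.norm_starProjection_orthogonal_eq_infDist,
    LinearMap.coe_range, ContinuousLinearMap.coe_coe]

theorem norm_dominatedApprox_le_mul (n : ℕ) (f : E) :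
    ‖dominatedApprox A C n f‖ ≤ n * ‖A f‖ := by
  rw [norm_dominatedApprox_eq_infDist]
  refine (Metric.infDist_le_dist_of_mem (Set.mem_range_self f)).trans_eq ?_
  rw [dist_eq_norm, ← sq_eq_sq₀ (norm_nonneg _) (by positivity), norm_graphMap_zero_sub_sq]
  simp

theorem norm_dominatedApprox_le (n : ℕ) (f : E) : ‖dominatedApprox A C n f‖ ≤ ‖C f‖ := by
  rw [norm_dominatedApprox_eq_infDist]
  refine (Metric.infDist_le_dist_of_mem (Set.mem_range_self 0)).trans_eq ?_
  rw [dist_eq_norm, ← sq_eq_sq₀ (norm_nonneg _) (norm_nonneg _), norm_graphMap_zero_sub_sq]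
  simp

theorem monotone_norm_dominatedApprox (f : E) :
    Monotone fun n => ‖dominatedApprox A C n f‖ := fun m n hmn => by
  simp only [norm_dominatedApprox_eq_infDist]
  refine (Metric.le_infDist (Set.range_nonempty _)).mpr ?_
  rintro _ ⟨g, rfl⟩
  rw [dist_eq_norm]
  exact (Metric.infDist_le_dist_of_mem (Set.mem_range_self g)).trans_eq
    (dist_eq_norm _ _) |>.trans (monotone_norm_graphMap_zero_sub A C f g hmn)

theorem bddAbove_range_norm_dominatedApprox (f : E) :
    BddAbove (Set.range fun n => ‖dominatedApprox A C n f‖) :=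
  ⟨‖C f‖, by rintro _ ⟨n, rfl⟩; exact norm_dominatedApprox_le A C n f⟩

variable [CompleteSpace E]

set_option synthInstance.maxHeartbeats 40000 in
theorem norm_inner_le_mul_norm_dominatedApprox {k : K} {h : H}
    (hkh : adjoint C k = adjoint A h) {n : ℕ} (hn : n ≠ 0) (f : E) :
    ‖⟪k, C f⟫_ℂ‖ ≤ (‖k‖ + ‖h‖ / n) * ‖dominatedApprox A C n f‖ := by
  set U := LinearMap.range (graphMap A C n : E →ₗ[ℂ] WithLp 2 (K × H))
  let w : WithLp 2 (K × H) := WithLp.toLp 2 (k, -((n : ℂ)⁻¹ • h))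
  have hw : w ∈ Uᗮ := by
    rw [Submodule.mem_orthogonal']
    rintro _ ⟨g, rfl⟩
    have hn' : (n : ℂ) ≠ 0 := Nat.cast_ne_zero.mpr hn
    simp [w, graphMap, WithLp.prod_inner_apply, inner_smul_left, inner_smul_right,
      ← adjoint_inner_left, hkh, hn']
  have hw_norm : ‖w‖ ≤ ‖k‖ + ‖h‖ / n := by
    rw [← sq_le_sq₀ (norm_nonneg _) (by positivity), WithLp.prod_norm_sq_eq_of_L2]
    simp only [w, WithLp.toLp_fst, WithLp.toLp_snd, norm_neg, norm_smul, norm_inv,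
      Complex.norm_natCast, inv_mul_eq_div]
    have : 0 ≤ ‖k‖ * (‖h‖ / n) := by positivity
    nlinarith
  calc ‖⟪k, C f⟫_ℂ‖ = ‖⟪w, dominatedApprox A C n f⟫_ℂ‖ := by
        rw [dominatedApprox, comp_apply, ← Submodule.inner_starProjection_left_eq_right,
          Submodule.starProjection_eq_self_iff.mpr hw]
        simp [w, graphMap, WithLp.prod_inner_apply]
    _ ≤ ‖w‖ * ‖dominatedApprox A C n f‖ := norm_inner_le_norm _ _
    _ ≤ (‖k‖ + ‖h‖ / n) * ‖dominatedApprox A C n f‖ := by gcongr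

theorem norm_inner_le_mul_iSup_norm_dominatedApprox {k : K} (hk : k ∈ DAB A C) (f : E) :
    ‖⟪k, C f⟫_ℂ‖ ≤ ‖k‖ * ⨆ n, ‖dominatedApprox A C n f‖ := by
  obtain ⟨h, hh⟩ := hk
  have hlim : Tendsto (fun n : ℕ => (‖k‖ + ‖h‖ / n) * ⨆ n, ‖dominatedApprox A C n f‖) atTop
      (𝓝 (‖k‖ * ⨆ n, ‖dominatedApprox A C n f‖)) := by
    simpa using ((tendsto_const_nhds.div_atTop tendsto_natCast_atTop_atTop).const_add
      ‖k‖).mul_const (⨆ n, ‖dominatedApprox A C n f‖)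
  refine ge_of_tendsto hlim ((eventually_ne_atTop 0).mono fun n hn => ?_)
  refine (norm_inner_le_mul_norm_dominatedApprox A C hh.symm hn f).trans ?_
  gcongr
  exact le_ciSup (bddAbove_range_norm_dominatedApprox A C f) n

theorem norm_le_iSup_norm_dominatedApprox
    (hC : LinearMap.range (C : E →ₗ[ℂ] K) ≤ (DAB A C).topologicalClosure) (f : E) :
    ‖C f‖ ≤ ⨆ n, ‖dominatedApprox A C n f‖ := by
  set L := ⨆ n, ‖dominatedApprox A C n f‖
  have hclosed : IsClosed {k : K | ‖⟪k, C f⟫_ℂ‖ ≤ ‖k‖ * L} :=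
    isClosed_le (by fun_prop) (by fun_prop)
  have hCf : ‖⟪C f, C f⟫_ℂ‖ ≤ ‖C f‖ * L :=
    closure_minimal (fun k hk => norm_inner_le_mul_iSup_norm_dominatedApprox A C hk f)
      hclosed (hC (LinearMap.mem_range_self (C : E →ₗ[ℂ] K) f))
  rw [← inner_self_re_eq_norm, inner_self_eq_norm_sq] at hCf
  rcases (norm_nonneg (C f)).eq_or_lt with hzero | hpos
  · rw [← hzero]
    exact le_ciSup_of_le (bddAbove_range_norm_dominatedApprox A C f) 0 (norm_nonneg _)
  · nlinarith

theorem tendsto_norm_dominatedApprox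
    (hC : LinearMap.range (C : E →ₗ[ℂ] K) ≤ (DAB A C).topologicalClosure) (f : E) :
    Tendsto (fun n => ‖dominatedApprox A C n f‖) atTop (𝓝 ‖C f‖) := by
  have hsup : ⨆ n, ‖dominatedApprox A C n f‖ = ‖C f‖ :=
    le_antisymm (ciSup_le fun n => norm_dominatedApprox_le A C n f)
      (norm_le_iSup_norm_dominatedApprox A C hC f)
  simpa [hsup] using tendsto_atTop_ciSup (monotone_norm_dominatedApprox A C f)
    (bddAbove_range_norm_dominatedApprox A C f)

theorem almostDominated_of_range_le_closure_DAB
    (hC : LinearMap.range (C : E →ₗ[ℂ] K) ≤ (DAB A C).topologicalClosure) :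
    AlmostDominated A C :=
  ⟨{ Kn := fun _ => WithLp 2 (K × H)
     Bn := dominatedApprox A C
     c := fun n => n
     c_nonneg := fun n => n.cast_nonneg
     bound := norm_dominatedApprox_le_mul A C
     mono := fun n f => monotone_norm_dominatedApprox A C f n.le_succ
     tendsto := tendsto_norm_dominatedApprox A C hC }⟩

end Approximation
section Decomposition

variable {E H K : Type}
    [NormedAddCommGroup E] [InnerProductSpace ℂ E] [CompleteSpace E]
    [NormedAddCommGroup H] [InnerProductSpace ℂ H] [CompleteSpace H]
    [NormedAddCommGroup K] [InnerProductSpace ℂ K] [CompleteSpace K]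
    (A : E →L[ℂ] H) (B : E →L[ℂ] K)

theorem range_sub_starProjection_comp_le_closure_DAB :
    LinearMap.range ((B - (DAB A B)ᗮ.starProjection ∘L B : E →L[ℂ] K) : E →ₗ[ℂ] K) ≤
      (DAB A (B - (DAB A B)ᗮ.starProjection ∘L B)).topologicalClosure := by
  set M := DAB A B
  set C := B - Mᗮ.starProjection ∘L B
  have hMC : M ≤ DAB A C := fun k hk => by
    have hCk : adjoint C k = adjoint B k := by
      simp [C, adjoint_comp, (isSelfAdjoint_starProjection Mᗮ).adjoint_eq,
        Submodule.starProjection_orthogonal_apply_eq_zero hk]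
    rw [DAB, Submodule.mem_comap, coe_coe, hCk]
    exact hk
  rintro _ ⟨f, rfl⟩
  refine Submodule.topologicalClosure_mono hMC ?_
  rw [← Submodule.orthogonal_orthogonal_eq_closure]
  exact Mᗮ.sub_starProjection_mem_orthogonal (B f)

theorem singularWith_starProjection_orthogonal_DAB_comp :
    SingularWith A ((DAB A B)ᗮ.starProjection ∘L B) := by
  rintro D ⟨c₁, -, hDA⟩ ⟨c₂, -, hDB⟩
  suffices adjoint D = 0 by simpa using congrArg adjoint this
  ext g
  obtain ⟨h, hh⟩ := range_adjoint_le_of_norm_le hDA (LinearMap.mem_range_self (adjoint D : E →ₗ[ℂ] E) g)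
  obtain ⟨k, hk⟩ := range_adjoint_le_of_norm_le hDB (LinearMap.mem_range_self (adjoint D : E →ₗ[ℂ] E) g)
  rw [coe_coe, coe_coe, adjoint_comp, (isSelfAdjoint_starProjection _).adjoint_eq,
    comp_apply] at hk
  have hmem : (DAB A B)ᗮ.starProjection k ∈ DAB A B := ⟨h, hh.trans hk.symm⟩
  have hzero : (DAB A B)ᗮ.starProjection k = 0 :=
    inner_self_eq_zero.mp (Submodule.inner_right_of_mem_orthogonal hmem
      ((DAB A B)ᗮ.starProjection_apply_mem k))
  simp [← hk, hzero]

end Decomposition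

/-- **Lebesgue decomposition.** Let `P` be the orthogonal projection of `K`
onto `D(A,B)ᗮ` (characterized by `P k ∈ D(A,B)ᗮ` and `k - P k ⊥ D(A,B)ᗮ`), and put
`B_reg = (I − P) ∘ B` and `B_sing = P ∘ B`. Then `B = B_reg + B_sing`, `B_reg` is almost
dominated by `A`, and `B_sing` is singular with respect to `A`. -/
theorem lebesgue_decomposition
    {E H K : Type}
    [NormedAddCommGroup E] [InnerProductSpace ℂ E] [CompleteSpace E]
    [NormedAddCommGroup H] [InnerProductSpace ℂ H] [CompleteSpace H]
    [NormedAddCommGroup K] [InnerProductSpace ℂ K] [CompleteSpace K]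
    (A : E →L[ℂ] H) (B : E →L[ℂ] K) (P : K →L[ℂ] K)
    (hP : ∀ k : K, P k ∈ (DAB A B)ᗮ ∧ k - P k ∈ ((DAB A B)ᗮ)ᗮ) :
    B = (B - P ∘L B) + P ∘L B ∧
    AlmostDominated A (B - P ∘L B) ∧
    SingularWith A (P ∘L B) := by
  obtain rfl : P = (DAB A B)ᗮ.starProjection :=
    ext fun k => (Submodule.eq_starProjection_of_mem_orthogonal (hP k).1 (hP k).2).symm
  exact ⟨(sub_add_cancel _ _).symm,
    almostDominated_of_range_le_closure_DAB A _ (range_sub_starProjection_comp_le_closure_DAB A B),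
    singularWith_starProjection_orthogonal_DAB_comp A B⟩
end
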